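/- arXiv:1806.02098 — 8 statements merged into one kernel-verified Lean document; each statement's English description precedes it below -/
import Mathlib

section
/- Let E = {x_1, …, x_N} be a 2d Pareto front sorted so that i < j implies x_i ≺ x_j. Then for all indices i₁ < i₂ ≤ i₃ in [1, N], the Euclidean distances satisfy d(x_{i₂}, x_{i₃}) < d(x_{i₁}, x_{i₃}). -/
/-- Points of the plane with the Euclidean structure. -/
abbrev E2 := EuclideanSpace ℝ (Fin 2)

lemma dist_formula (a b : E2) :
    dist a b = Real.sqrt ((a 0 - b 0) ^ 2 + (a 1 - b 1) ^ 2) := by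
  rw [EuclideanSpace.dist_eq, Fin.sum_univ_two]
  simp [Real.dist_eq, sq_abs]

/-- In a sorted 2d Pareto front, for indices `i₁ < i₂ ≤ i₃` in `[1, N]`,
`d(x i₂, x i₃) < d(x i₁, x i₃)`. -/
theorem dist_lt_of_lt_le (N : ℕ) (x : ℕ → E2)
    (hsort : ∀ i j, 1 ≤ i → i < j → j ≤ N → x i 0 < x j 0 ∧ x j 1 < x i 1)
    (i₁ i₂ i₃ : ℕ) (h1 : 1 ≤ i₁) (h12 : i₁ < i₂) (h23 : i₂ ≤ i₃) (h3 : i₃ ≤ N) :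
    dist (x i₂) (x i₃) < dist (x i₁) (x i₃) := by
  have h13 : i₁ < i₃ := lt_of_lt_of_le h12 h23
  obtain ⟨ha, hb⟩ := hsort i₁ i₃ h1 h13 h3
  rw [dist_formula, dist_formula]
  rcases eq_or_lt_of_le h23 with rfl | h23'
  · apply Real.sqrt_lt_sqrt (by positivity)
    nlinarith
  · obtain ⟨hc, hd⟩ := hsort i₁ i₂ h1 h12 (le_trans (le_of_lt h23') h3)
    obtain ⟨he, hf⟩ := hsort i₂ i₃ (le_trans h1 (le_of_lt h12)) h23' h3
    apply Real.sqrt_lt_sqrt (by positivity)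
    nlinarith
end

section
/- Let α > 0 and let E = {x_1, …, x_N} be a sorted 2d Pareto front. For all indices i, i' with i + 1 < i' ≤ N, one has d_{i,i,i'} > d_{i,i+1,i'} and d_{i,i',i'} > d_{i,i'−1,i'}. Consequently the medoid cost of the interval cluster C_{i,i'} is attained at an interior index: f_α(C_{i,i'}) = min_{l ∈ [i+1, i'−1]} d_{i,l,i'}. -/
open scoped Classical

/-- The `α`-medoid cost `f_α(P) = min_{y ∈ P} Σ_{x ∈ P} ‖x − y‖^α` of a finite set `P`. -/
noncomputable def fCost (α : ℝ) (P : Finset E2) : ℝ :=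
  sInf ((fun y => ∑ z ∈ P, dist z y ^ α) '' ↑P)

/-- The interval cluster `C_{i,i'} = {x j : i ≤ j ≤ i'}`. -/
noncomputable def C (x : ℕ → E2) (i i' : ℕ) : Finset E2 := (Finset.Icc i i').image x

/-- `d_{i,c,i'} = Σ_{k=i}^{i'} ‖x k − x c‖^α`. -/
noncomputable def dCost (α : ℝ) (x : ℕ → E2) (i c i' : ℕ) : ℝ :=
  ∑ k ∈ Finset.Icc i i', dist (x k) (x c) ^ α

lemma dist_lt_coords (a b c : E2) (h0 : dist (a 0) (b 0) < dist (a 0) (c 0))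
    (h1 : dist (a 1) (b 1) < dist (a 1) (c 1)) : dist a b < dist a c := by
  rw [EuclideanSpace.dist_eq, EuclideanSpace.dist_eq]
  apply Real.sqrt_lt_sqrt (by positivity)
  rw [Fin.sum_univ_two, Fin.sum_univ_two]
  exact add_lt_add (pow_lt_pow_left₀ h0 dist_nonneg two_ne_zero)
    (pow_lt_pow_left₀ h1 dist_nonneg two_ne_zero)

lemma between_lt {N : ℕ} {x : ℕ → E2}
    (hsort : ∀ i j, 1 ≤ i → i < j → j ≤ N → x i 0 < x j 0 ∧ x j 1 < x i 1)
    {a b c : ℕ} (h1 : 1 ≤ a) (hab : a < b) (hbc : b < c) (hcN : c ≤ N) :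
    dist (x c) (x b) < dist (x c) (x a) ∧ dist (x a) (x b) < dist (x a) (x c) := by
  have hb1 : 1 ≤ b := by omega
  have h1' := hsort a b h1 hab (by omega)
  have h2' := hsort b c hb1 hbc hcN
  have h3' := hsort a c h1 (by omega) hcN
  constructor
  · exact dist_lt_coords _ _ _ (by rw [Real.dist_eq, Real.dist_eq]; rw [abs_of_pos, abs_of_pos] <;> linarith)
      (by rw [Real.dist_eq, Real.dist_eq]; rw [abs_of_neg, abs_of_neg] <;> linarith)
  · exact dist_lt_coords _ _ _ (by rw [Real.dist_eq, Real.dist_eq]; rw [abs_of_neg, abs_of_neg] <;> linarith)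
      (by rw [Real.dist_eq, Real.dist_eq]; rw [abs_of_pos, abs_of_pos] <;> linarith)

/-- For `i + 1 < i' ≤ N`, the extreme points are not medoids:
`d_{i,i,i'} > d_{i,i+1,i'}` and `d_{i,i',i'} > d_{i,i'-1,i'}`; hence the medoid cost of
the interval cluster `C_{i,i'}` is attained at an interior index. -/
theorem interior_medoid (α : ℝ) (hα : 0 < α) (N : ℕ) (x : ℕ → E2)
    (hsort : ∀ i j, 1 ≤ i → i < j → j ≤ N → x i 0 < x j 0 ∧ x j 1 < x i 1)
    (i i' : ℕ) (h1 : 1 ≤ i) (hii' : i + 1 < i') (hi'N : i' ≤ N) :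
    dCost α x i i i' > dCost α x i (i + 1) i' ∧
    dCost α x i i' i' > dCost α x i (i' - 1) i' ∧
    fCost α (C x i i') = sInf ((fun l => dCost α x i l i') '' Set.Icc (i + 1) (i' - 1)) := by
  have hz : (0:ℝ) ^ α = 0 := Real.zero_rpow hα.ne'
  -- first inequality
  have key1 : dCost α x i i i' > dCost α x i (i + 1) i' := by
    have hdecomp : Finset.Icc i i' = insert i (insert (i+1) (Finset.Icc (i+2) i')) := by
      ext k; simp only [Finset.mem_insert, Finset.mem_Icc]; omega
    have hni : i ∉ insert (i+1) (Finset.Icc (i+2) i') := by simp only [Finset.mem_insert, Finset.mem_Icc]; omega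
    have hni1 : i+1 ∉ Finset.Icc (i+2) i' := by simp only [Finset.mem_Icc]; omega
    unfold dCost
    rw [hdecomp, Finset.sum_insert hni, Finset.sum_insert hni1,
      Finset.sum_insert hni, Finset.sum_insert hni1]
    rw [dist_self, dist_self, hz, dist_comm (x i) (x (i+1))]
    have hsum : ∑ k ∈ Finset.Icc (i+2) i', dist (x k) (x (i+1)) ^ α <
        ∑ k ∈ Finset.Icc (i+2) i', dist (x k) (x i) ^ α := by
      apply Finset.sum_lt_sum_of_nonempty
      · exact Finset.nonempty_Icc.2 (by omega)
      · intro k hk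
        rw [Finset.mem_Icc] at hk
        exact Real.rpow_lt_rpow dist_nonneg
          ((between_lt hsort h1 (Nat.lt_succ_self i) (by omega) (by omega)).1) hα
    linarith
  -- second inequality
  have key2 : dCost α x i i' i' > dCost α x i (i' - 1) i' := by
    have hdecomp : Finset.Icc i i' = insert i' (insert (i'-1) (Finset.Icc i (i'-2))) := by
      ext k; simp only [Finset.mem_insert, Finset.mem_Icc]; omega
    have hni : i' ∉ insert (i'-1) (Finset.Icc i (i'-2)) := by simp only [Finset.mem_insert, Finset.mem_Icc]; omega
    have hni1 : i'-1 ∉ Finset.Icc i (i'-2) := by simp only [Finset.mem_insert, Finset.mem_Icc]; omega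
    unfold dCost
    rw [hdecomp, Finset.sum_insert hni, Finset.sum_insert hni1,
      Finset.sum_insert hni, Finset.sum_insert hni1]
    rw [dist_self, dist_self, hz, dist_comm (x i') (x (i'-1))]
    have hsum : ∑ k ∈ Finset.Icc i (i'-2), dist (x k) (x (i'-1)) ^ α <
        ∑ k ∈ Finset.Icc i (i'-2), dist (x k) (x i') ^ α := by
      apply Finset.sum_lt_sum_of_nonempty
      · exact Finset.nonempty_Icc.2 (by omega)
      · intro k hk
        rw [Finset.mem_Icc] at hk
        have := (between_lt hsort (show 1 ≤ k by omega) (show k < i'-1 by omega)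
          (show i'-1 < i' by omega) hi'N).2
        exact Real.rpow_lt_rpow dist_nonneg this hα
    linarith
  refine ⟨key1, key2, ?_⟩
  -- injectivity of x on Icc i i'
  have hinj : ∀ a ∈ Finset.Icc i i', ∀ b ∈ Finset.Icc i i', x a = x b → a = b := by
    intro a ha b hb hab
    rw [Finset.mem_Icc] at ha hb
    by_contra hne
    rcases Nat.lt_or_ge a b with h | h
    · have := (hsort a b (by omega) h (by omega)).1
      rw [hab] at this; exact lt_irrefl _ this
    · have hba : b < a := by omega
      have := (hsort b a (by omega) hba (by omega)).1
      rw [hab] at this; exact lt_irrefl _ this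
  have hC : ∀ l, (∑ z ∈ C x i i', dist z (x l) ^ α) = dCost α x i l i' := by
    intro l
    unfold C dCost
    exact Finset.sum_image hinj
  have hset : ((fun y => ∑ z ∈ C x i i', dist z y ^ α) '' ↑(C x i i')) =
      (fun l => dCost α x i l i') '' Set.Icc i i' := by
    unfold C
    rw [Finset.coe_image, Finset.coe_Icc, Set.image_image]
    exact Set.image_congr fun l _ => hC l
  rw [fCost, hset]
  -- now compare the two infima
  have hfin1 : ((fun l => dCost α x i l i') '' Set.Icc i i').Finite :=
    (Set.finite_Icc _ _).image _
  have hfin2 : ((fun l => dCost α x i l i') '' Set.Icc (i+1) (i'-1)).Finite :=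
    (Set.finite_Icc _ _).image _
  have hsub : ((fun l => dCost α x i l i') '' Set.Icc (i+1) (i'-1)) ⊆
      ((fun l => dCost α x i l i') '' Set.Icc i i') := by
    apply Set.image_mono
    intro l hl; simp only [Set.mem_Icc] at *; omega
  have hne2 : ((fun l => dCost α x i l i') '' Set.Icc (i+1) (i'-1)).Nonempty := by
    apply Set.Nonempty.image
    rw [Set.nonempty_Icc]; omega
  apply le_antisymm
  · exact csInf_le_csInf hfin1.bddBelow hne2 hsub
  · apply le_csInf (hne2.mono hsub)
    rintro b ⟨l, hl, rfl⟩
    rw [Set.mem_Icc] at hl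
    rcases eq_or_ne l i with rfl | hli
    · calc sInf _ ≤ dCost α x l (l+1) i' :=
            csInf_le hfin2.bddBelow ⟨l+1, by rw [Set.mem_Icc]; omega, rfl⟩
        _ ≤ dCost α x l l i' := le_of_lt key1
    · rcases eq_or_ne l i' with rfl | hli'
      · calc sInf _ ≤ dCost α x i (l-1) l :=
              csInf_le hfin2.bddBelow ⟨l-1, by rw [Set.mem_Icc]; omega, rfl⟩
          _ ≤ dCost α x i l l := le_of_lt key2
      · exact csInf_le hfin2.bddBelow ⟨l, by rw [Set.mem_Icc]; omega, rfl⟩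
end

section
/- Let α > 0 and let E = {x_1, …, x_N} be a sorted 2d Pareto front. Let 1 ≤ i ≤ i' < N and let c ∈ [i, i'] be an α-medoid index of C_{i,i'}, i.e. d_{i,c,i'} = min_{l ∈ [i,i']} d_{i,l,i'}. Then for every c'' with i ≤ c'' < c, one has d_{i,c,i'+1} < d_{i,c'',i'+1}. In particular there exists an α-medoid index c' of C_{i,i'+1} with c ≤ c' ≤ i'+1. -/
lemma dist_key (N : ℕ) (x : ℕ → E2)
    (hsort : ∀ i j, 1 ≤ i → i < j → j ≤ N → x i 0 < x j 0 ∧ x j 1 < x i 1)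
    (a b c : ℕ) (h1 : 1 ≤ a) (hab : a < b) (hbc : b < c) (hcN : c ≤ N) :
    dist (x c) (x b) < dist (x c) (x a) := by
  have h1b : 1 ≤ b := le_trans h1 (le_of_lt hab)
  have hab' := hsort a b h1 hab (le_trans (le_of_lt hbc) hcN)
  have hbc' := hsort b c h1b hbc hcN
  have hac := hsort a c h1 (lt_trans hab hbc) hcN
  rw [EuclideanSpace.dist_eq, EuclideanSpace.dist_eq]
  apply Real.sqrt_lt_sqrt
  · positivity
  · rw [Fin.sum_univ_two, Fin.sum_univ_two]
    simp only [Real.dist_eq, sq_abs]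
    have h0 : (x c 0 - x b 0)^2 < (x c 0 - x a 0)^2 := by nlinarith [hab'.1, hbc'.1, hac.1]
    have h1' : (x c 1 - x b 1)^2 < (x c 1 - x a 1)^2 := by nlinarith [hab'.2, hbc'.2, hac.2]
    linarith

/-- If `c` is an `α`-medoid index of `C_{i,i'}` (with `i' < N`), then every index `c'' < c`
is strictly worse for `C_{i,i'+1}`; in particular some `α`-medoid index `c'` of
`C_{i,i'+1}` satisfies `c ≤ c' ≤ i'+1`. -/
theorem medoid_monotone_right (α : ℝ) (hα : 0 < α) (N : ℕ) (x : ℕ → E2)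
    (hsort : ∀ i j, 1 ≤ i → i < j → j ≤ N → x i 0 < x j 0 ∧ x j 1 < x i 1)
    (i i' c : ℕ) (h1 : 1 ≤ i) (hii' : i ≤ i') (hi'N : i' + 1 ≤ N)
    (hc : c ∈ Set.Icc i i')
    (hmed : ∀ l ∈ Set.Icc i i', dCost α x i c i' ≤ dCost α x i l i') :
    (∀ c'', i ≤ c'' → c'' < c → dCost α x i c (i' + 1) < dCost α x i c'' (i' + 1)) ∧
    (∃ c', c ≤ c' ∧ c' ≤ i' + 1 ∧
      ∀ l ∈ Set.Icc i (i' + 1), dCost α x i c' (i' + 1) ≤ dCost α x i l (i' + 1)) := by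
  obtain ⟨hic, hci'⟩ := hc
  have key : ∀ c'', i ≤ c'' → c'' < c →
      dCost α x i c (i' + 1) < dCost α x i c'' (i' + 1) := by
    intro c'' hic'' hc''c
    have hsplit : ∀ l, dCost α x i l (i' + 1)
        = dCost α x i l i' + dist (x (i'+1)) (x l) ^ α := by
      intro l
      unfold dCost
      rw [Finset.sum_Icc_succ_top (by omega : i ≤ i' + 1)]
    rw [hsplit, hsplit]
    have hdist : dist (x (i'+1)) (x c) < dist (x (i'+1)) (x c'') := by
      exact dist_key N x hsort c'' c (i'+1) (le_trans h1 hic'')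
        hc''c (by omega) hi'N
    have hpow : dist (x (i'+1)) (x c) ^ α < dist (x (i'+1)) (x c'') ^ α :=
      Real.rpow_lt_rpow dist_nonneg hdist hα
    have := hmed c'' ⟨hic'', by omega⟩
    linarith
  refine ⟨key, ?_⟩
  obtain ⟨c', hc'mem, hc'min⟩ := Finset.exists_min_image (Finset.Icc i (i'+1))
    (fun l => dCost α x i l (i' + 1)) ⟨i, Finset.mem_Icc.mpr ⟨le_refl i, by omega⟩⟩
  rw [Finset.mem_Icc] at hc'mem
  have hcc' : c ≤ c' := by
    by_contra h
    push_neg at h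
    have h1' := key c' hc'mem.1 h
    have h2 := hc'min c (Finset.mem_Icc.mpr ⟨hic, by omega⟩)
    linarith
  exact ⟨c', hcc', hc'mem.2, fun l hl => hc'min l (Finset.mem_Icc.mpr ⟨hl.1, hl.2⟩)⟩
end

section
/- Let α > 0 and let E = {x_1, …, x_N} be a sorted 2d Pareto front. Let 1 < i ≤ i' ≤ N and let c ∈ [i, i'] be an α-medoid index of C_{i,i'}, i.e. d_{i,c,i'} = min_{l ∈ [i,i']} d_{i,l,i'}. Then for every c'' with c < c'' ≤ i', one has d_{i−1,c,i'} < d_{i−1,c'',i'}. In particular there exists an α-medoid index c'' of C_{i−1,i'} with i−1 ≤ c'' ≤ c. -/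
lemma dist_lt_of_coords (p q r : E2) (h0 : |p 0 - q 0| < |p 0 - r 0|)
    (h1 : |p 1 - q 1| < |p 1 - r 1|) : dist p q < dist p r := by
  rw [EuclideanSpace.dist_eq, EuclideanSpace.dist_eq]
  apply Real.sqrt_lt_sqrt (by positivity)
  rw [Fin.sum_univ_two, Fin.sum_univ_two]
  simp only [Real.dist_eq]
  have a0 := abs_nonneg (p 0 - q 0)
  have a1 := abs_nonneg (p 1 - q 1)
  nlinarith [h0, h1, a0, a1]

/-- If `c` is an `α`-medoid index of `C_{i,i'}` (with `1 < i`), then every index `c'' > c`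
is strictly worse for `C_{i−1,i'}`; in particular some `α`-medoid index `c''` of
`C_{i−1,i'}` satisfies `i−1 ≤ c'' ≤ c`. -/
theorem medoid_monotone_left (α : ℝ) (hα : 0 < α) (N : ℕ) (x : ℕ → E2)
    (hsort : ∀ i j, 1 ≤ i → i < j → j ≤ N → x i 0 < x j 0 ∧ x j 1 < x i 1)
    (i i' c : ℕ) (h1 : 1 < i) (hii' : i ≤ i') (hi'N : i' ≤ N)
    (hc : c ∈ Set.Icc i i')
    (hmed : ∀ l ∈ Set.Icc i i', dCost α x i c i' ≤ dCost α x i l i') :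
    (∀ c'', c < c'' → c'' ≤ i' → dCost α x (i - 1) c i' < dCost α x (i - 1) c'' i') ∧
    (∃ c'', i - 1 ≤ c'' ∧ c'' ≤ c ∧
      ∀ l ∈ Set.Icc (i - 1) i', dCost α x (i - 1) c'' i' ≤ dCost α x (i - 1) l i') := by
  obtain ⟨hic, hci'⟩ := hc
  have hsplit : ∀ l, dCost α x (i - 1) l i' =
      dist (x (i - 1)) (x l) ^ α + dCost α x i l i' := by
    intro l
    have hset : Finset.Icc (i - 1) i' = insert (i - 1) (Finset.Icc i i') := by
      ext k; simp [Finset.mem_Icc]; omega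
    rw [dCost, hset, Finset.sum_insert (by simp [Finset.mem_Icc]; omega)]
    rfl
  have key : ∀ c'', c < c'' → c'' ≤ i' →
      dCost α x (i - 1) c i' < dCost α x (i - 1) c'' i' := by
    intro c'' hcc hc''
    rw [hsplit, hsplit]
    have hdist : dist (x (i - 1)) (x c) < dist (x (i - 1)) (x c'') := by
      have h1' : 1 ≤ i - 1 := by omega
      have hlt1 : i - 1 < c := by omega
      have hA := hsort (i - 1) c h1' hlt1 (by omega)
      have hB := hsort (i - 1) c'' h1' (by omega) (by omega)
      have hC := hsort c c'' (by omega) hcc (by omega)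
      apply dist_lt_of_coords
      · rw [abs_of_nonpos (by linarith [hA.1]), abs_of_nonpos (by linarith [hB.1])]
        linarith [hC.1]
      · rw [abs_of_nonneg (by linarith [hA.2]), abs_of_nonneg (by linarith [hB.2])]
        linarith [hC.2]
    have hpow : dist (x (i - 1)) (x c) ^ α < dist (x (i - 1)) (x c'') ^ α :=
      Real.rpow_lt_rpow dist_nonneg hdist hα
    have hle := hmed c'' ⟨by omega, hc''⟩
    linarith
  refine ⟨key, ?_⟩
  obtain ⟨c'', hmem, hmin⟩ := Finset.exists_min_image (Finset.Icc (i - 1) i')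
    (fun l => dCost α x (i - 1) l i') ⟨i, by simp [Finset.mem_Icc]; omega⟩
  rw [Finset.mem_Icc] at hmem
  by_cases hle : c'' ≤ c
  · exact ⟨c'', hmem.1, hle, fun l hl => hmin l (Finset.mem_Icc.mpr ⟨hl.1, hl.2⟩)⟩
  · exfalso
    have := key c'' (by omega) hmem.2
    have := hmin c (Finset.mem_Icc.mpr ⟨by omega, hci'⟩)
    linarith
end

section
/- Let α > 0 and let E = {x_1, …, x_N} be a sorted 2d Pareto front with N ≥ 2. Let (P₁, P₂, c₁, c₂) be a local minimum of 2-α-Med2dPF on E, with the clusters labeled so that c₁ ≺ c₂. Then there exists i ∈ [1, N−1] such that P₁ = {x_j : 1 ≤ j ≤ i} and P₂ = {x_j : i+1 ≤ j ≤ N}. Consequently, at most N−1 distinct partitions {P₁, P₂} of E can occur as local minima of 2-α-Med2dPF. -/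
open scoped Classical

/-- Pareto dominance when minimizing two objectives: `y ≺ z` iff `y¹ < z¹` and `y² > z²`. -/
def prec (y z : E2) : Prop := y 0 < z 0 ∧ z 1 < y 1

/-- `(P₁, P₂, c₁, c₂)` is a local minimum of 2-α-Med2dPF on `E`: `P₁, P₂` is a partition
of `E` into two nonempty subsets, `c₁` (resp. `c₂`) is an `α`-medoid of `P₁` (resp. `P₂`),
and every point is at least as close to the medoid of its own cluster. -/
def LocalMin2 (α : ℝ) (E P₁ P₂ : Finset E2) (c₁ c₂ : E2) : Prop :=
  P₁ ∪ P₂ = E ∧ Disjoint P₁ P₂ ∧ P₁.Nonempty ∧ P₂.Nonempty ∧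
  c₁ ∈ P₁ ∧ c₂ ∈ P₂ ∧
  (∀ y ∈ P₁, ∑ z ∈ P₁, dist z c₁ ^ α ≤ ∑ z ∈ P₁, dist z y ^ α) ∧
  (∀ y ∈ P₂, ∑ z ∈ P₂, dist z c₂ ^ α ≤ ∑ z ∈ P₂, dist z y ^ α) ∧
  (∀ p ∈ P₁, dist p c₁ ≤ dist p c₂) ∧
  (∀ p ∈ P₂, dist p c₂ ≤ dist p c₁)

lemma dist_sq_expand (p q : E2) : dist p q ^ 2 = (p 0 - q 0) ^ 2 + (p 1 - q 1) ^ 2 := by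
  rw [EuclideanSpace.dist_eq, Real.sq_sqrt (by positivity)]
  simp [Fin.sum_univ_two, Real.dist_eq, sq_abs]

/-- Every local minimum of 2-α-Med2dPF on a sorted 2d Pareto front is an interval
bipartition `{x_1,…,x_i}, {x_{i+1},…,x_N}`; consequently at most `N−1` distinct
partitions occur as local minima. -/
theorem localMin2_interval (α : ℝ) (hα : 0 < α) (N : ℕ) (hN : 2 ≤ N) (x : ℕ → E2)
    (hsort : ∀ i j, 1 ≤ i → i < j → j ≤ N → prec (x i) (x j)) :
    (∀ P₁ P₂ : Finset E2, ∀ c₁ c₂ : E2,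
      LocalMin2 α ((Finset.Icc 1 N).image x) P₁ P₂ c₁ c₂ → prec c₁ c₂ →
      ∃ i, 1 ≤ i ∧ i ≤ N - 1 ∧
        P₁ = (Finset.Icc 1 i).image x ∧ P₂ = (Finset.Icc (i + 1) N).image x) ∧
    Set.ncard {p : Finset E2 × Finset E2 | ∃ c₁ c₂ : E2,
        LocalMin2 α ((Finset.Icc 1 N).image x) p.1 p.2 c₁ c₂ ∧ prec c₁ c₂} ≤ N - 1 := by
  have key : ∀ P₁ P₂ : Finset E2, ∀ c₁ c₂ : E2,
      LocalMin2 α ((Finset.Icc 1 N).image x) P₁ P₂ c₁ c₂ → prec c₁ c₂ →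
      ∃ i, 1 ≤ i ∧ i ≤ N - 1 ∧
        P₁ = (Finset.Icc 1 i).image x ∧ P₂ = (Finset.Icc (i + 1) N).image x := by
    intro P₁ P₂ c₁ c₂ hlm hprec
    obtain ⟨hun, hdisj, hne1, hne2, hc1, hc2, _, _, hcl1, hcl2⟩ := hlm
    obtain ⟨hc01, hc11⟩ := hprec
    -- the "discriminant" is strictly increasing along the front
    have hD : ∀ j k, 1 ≤ j → j < k → k ≤ N →
        dist (x j) c₁ ^ 2 - dist (x j) c₂ ^ 2 <
        dist (x k) c₁ ^ 2 - dist (x k) c₂ ^ 2 := by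
      intro j k hj hjk hk
      obtain ⟨h1, h2⟩ := hsort j k hj hjk hk
      rw [dist_sq_expand, dist_sq_expand, dist_sq_expand, dist_sq_expand]
      nlinarith [h1, h2, hc01, hc11]
    -- indices of P₁ points are all below indices of P₂ points
    have hlt : ∀ j k, 1 ≤ j → j ≤ N → 1 ≤ k → k ≤ N → x j ∈ P₁ → x k ∈ P₂ → j < k := by
      intro j k hj1 hjN hk1 hkN hjP hkP
      by_contra hcon
      push_neg at hcon
      rcases eq_or_lt_of_le hcon with heq | hlt'
      · subst heq
        exact (Finset.disjoint_left.mp hdisj hjP) hkP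
      · have hd := hD k j hk1 hlt' hjN
        have h1 : dist (x j) c₁ ≤ dist (x j) c₂ := hcl1 _ hjP
        have h2 : dist (x k) c₂ ≤ dist (x k) c₁ := hcl2 _ hkP
        have h1' : dist (x j) c₁ ^ 2 ≤ dist (x j) c₂ ^ 2 :=
          pow_le_pow_left₀ dist_nonneg h1 2
        have h2' : dist (x k) c₂ ^ 2 ≤ dist (x k) c₁ ^ 2 :=
          pow_le_pow_left₀ dist_nonneg h2 2
        linarith
    -- every point of the ground set is in P₁ or P₂
    have hmem : ∀ j, 1 ≤ j → j ≤ N → x j ∈ P₁ ∨ x j ∈ P₂ := by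
      intro j hj1 hjN
      have : x j ∈ P₁ ∪ P₂ := by
        rw [hun]
        exact Finset.mem_image_of_mem x (Finset.mem_Icc.mpr ⟨hj1, hjN⟩)
      exact Finset.mem_union.mp this
    have hrep : ∀ p ∈ P₁ ∪ P₂, ∃ j, 1 ≤ j ∧ j ≤ N ∧ x j = p := by
      intro p hp
      rw [hun] at hp
      obtain ⟨j, hj, hje⟩ := Finset.mem_image.mp hp
      rw [Finset.mem_Icc] at hj
      exact ⟨j, hj.1, hj.2, hje⟩
    set S₁ : Finset ℕ := (Finset.Icc 1 N).filter (fun j => x j ∈ P₁) with hS₁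
    have hS₁ne : S₁.Nonempty := by
      obtain ⟨p, hp⟩ := hne1
      obtain ⟨j, hj1, hjN, hje⟩ := hrep p (Finset.mem_union_left _ hp)
      exact ⟨j, Finset.mem_filter.mpr ⟨Finset.mem_Icc.mpr ⟨hj1, hjN⟩, hje ▸ hp⟩⟩
    set i := S₁.max' hS₁ne with hi
    have hiS : i ∈ S₁ := S₁.max'_mem hS₁ne
    have hiIcc : i ∈ Finset.Icc 1 N := (Finset.mem_filter.mp hiS).1
    have hiP₁ : x i ∈ P₁ := (Finset.mem_filter.mp hiS).2
    have hi1 : 1 ≤ i := (Finset.mem_Icc.mp hiIcc).1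
    have hiN : i ≤ N := (Finset.mem_Icc.mp hiIcc).2
    -- i ≤ N - 1
    obtain ⟨q, hq⟩ := hne2
    obtain ⟨k₀, hk₀1, hk₀N, hk₀e⟩ := hrep q (Finset.mem_union_right _ hq)
    have hik₀ : i < k₀ := hlt i k₀ hi1 hiN hk₀1 hk₀N hiP₁ (hk₀e ▸ hq)
    refine ⟨i, hi1, by omega, ?_, ?_⟩
    · apply Finset.Subset.antisymm
      · intro p hp
        obtain ⟨j, hj1, hjN, hje⟩ := hrep p (Finset.mem_union_left _ hp)
        have hjS : j ∈ S₁ := Finset.mem_filter.mpr ⟨Finset.mem_Icc.mpr ⟨hj1, hjN⟩, hje ▸ hp⟩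
        have : j ≤ i := S₁.le_max' j hjS
        exact hje ▸ Finset.mem_image_of_mem x (Finset.mem_Icc.mpr ⟨hj1, this⟩)
      · intro p hp
        obtain ⟨j, hj, hje⟩ := Finset.mem_image.mp hp
        rw [Finset.mem_Icc] at hj
        rcases hmem j hj.1 (by omega) with h | h
        · exact hje ▸ h
        · exact absurd (hlt i j hi1 hiN hj.1 (by omega) hiP₁ h) (by omega)
    · apply Finset.Subset.antisymm
      · intro p hp
        obtain ⟨k, hk1, hkN, hke⟩ := hrep p (Finset.mem_union_right _ hp)
        have : i < k := hlt i k hi1 hiN hk1 hkN hiP₁ (hke ▸ hp)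
        exact hke ▸ Finset.mem_image_of_mem x (Finset.mem_Icc.mpr ⟨by omega, hkN⟩)
      · intro p hp
        obtain ⟨j, hj, hje⟩ := Finset.mem_image.mp hp
        rw [Finset.mem_Icc] at hj
        rcases hmem j (by omega) hj.2 with h | h
        · have hjS : j ∈ S₁ :=
            Finset.mem_filter.mpr ⟨Finset.mem_Icc.mpr ⟨by omega, hj.2⟩, h⟩
          exact absurd (S₁.le_max' j hjS) (by omega)
        · exact hje ▸ h
  refine ⟨key, ?_⟩
  have hsub : {p : Finset E2 × Finset E2 | ∃ c₁ c₂ : E2,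
        LocalMin2 α ((Finset.Icc 1 N).image x) p.1 p.2 c₁ c₂ ∧ prec c₁ c₂} ⊆
      ↑((Finset.Icc 1 (N - 1)).image
        (fun i => ((Finset.Icc 1 i).image x, (Finset.Icc (i + 1) N).image x))) := by
    rintro ⟨P₁, P₂⟩ ⟨c₁, c₂, hlm, hprec⟩
    obtain ⟨i, hi1, hi2, h1, h2⟩ := key P₁ P₂ c₁ c₂ hlm hprec
    simp only [Finset.coe_image, Set.mem_image, Finset.mem_coe, Finset.mem_Icc]
    exact ⟨i, ⟨hi1, hi2⟩, by simp [h1, h2]⟩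
  calc Set.ncard _ ≤ _ := Set.ncard_le_ncard hsub (Finset.finite_toSet _)
    _ = ((Finset.Icc 1 (N - 1)).image
        (fun i => ((Finset.Icc 1 i).image x, (Finset.Icc (i + 1) N).image x))).card :=
      Set.ncard_coe_finset _
    _ ≤ (Finset.Icc 1 (N - 1)).card := Finset.card_image_le
    _ = N - 1 := by rw [Nat.card_Icc]; omega
end

section
/- Let α > 0, K ≥ 1, and let E = {x_1, …, x_N} be a sorted 2d Pareto front. The number of distinct partitions of E into K nonempty subsets that occur as the clusters of some local minimum of K-α-Med2dPF is at most the binomial coefficient C(N, K) (N choose K). -/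
open scoped Classical

/-- An (unordered) partition `π` of `E` into `K` nonempty subsets is a local minimum of
K-α-Med2dPF if there is a choice of `α`-medoids, one in each part, such that every point
is at least as close to the medoid of its own part as to any other medoid. -/
def IsLocalMinPartition (α : ℝ) (E : Finset E2) (K : ℕ) (π : Finset (Finset E2)) : Prop :=
  π.card = K ∧ (∀ p ∈ π, p.Nonempty) ∧
  (∀ p ∈ π, ∀ q ∈ π, p ≠ q → Disjoint p q) ∧
  π.biUnion id = E ∧
  ∃ c : Finset E2 → E2, ∀ p ∈ π, c p ∈ p ∧
    (∀ y ∈ p, ∑ z ∈ p, dist z (c p) ^ α ≤ ∑ z ∈ p, dist z y ^ α) ∧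
    (∀ q ∈ π, q ≠ p → ∀ y ∈ p, dist y (c p) ≤ dist y (c q))

/-!
Along a sorted Pareto front the distance from `x a` to `x b` strictly increases as `b` moves
away from `a`. If `x j` lay between two points `x i`, `x k` of a cluster with medoid `x m` but
belonged to another cluster with medoid `x m'`, then, taking `i` on the side of `j` away from
`m`, the Voronoi conditions at `x i` and `x j` together with this monotonicity give a strict
cycle of inequalities. So every cluster of a local minimum is a run of consecutive indices, and
the partition is recovered from the set of first indices of its clusters, a `K`-subset of
`{1, …, N}`.
-/

open Finset

theorem EuclideanSpace.dist_lt_dist_of_forall_mul_pos {n : Type*} [Fintype n] [Nonempty n]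
    {u v w : EuclideanSpace ℝ n} (h : ∀ i, 0 < (v i - u i) * (w i - v i)) :
    dist u v < dist u w := by
  rw [EuclideanSpace.dist_eq, EuclideanSpace.dist_eq]
  refine Real.sqrt_lt_sqrt (by positivity) (sum_lt_sum_of_nonempty univ_nonempty fun i _ => ?_)
  rw [Real.dist_eq, Real.dist_eq, sq_abs, sq_abs]
  nlinarith [h i, sq_nonneg (w i - v i)]

section DistStrictMonoAway

variable {ι X : Type*} [LinearOrder ι] [PseudoMetricSpace X] {x : ι → X} {S : Set ι}

def DistStrictMonoAwayOn (x : ι → X) (S : Set ι) : Prop :=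
  ∀ ⦃a⦄, a ∈ S → ∀ ⦃b⦄, b ∈ S → ∀ ⦃c⦄, c ∈ S → a < b → b < c →
    dist (x a) (x b) < dist (x a) (x c) ∧ dist (x c) (x b) < dist (x c) (x a)

theorem distStrictMonoAwayOn_of_monotone_coords {n : Type*} [Fintype n] [Nonempty n]
    {x : ι → EuclideanSpace ℝ n}
    (hx : ∀ k, StrictMonoOn (fun i => x i k) S ∨ StrictAntiOn (fun i => x i k) S) :
    DistStrictMonoAwayOn x S := by
  intro a ha b hb c hc hab hbc
  have between : ∀ k, 0 < (x b k - x a k) * (x c k - x b k) := fun k => by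
    rcases hx k with h | h
    · exact mul_pos (sub_pos.2 (h ha hb hab)) (sub_pos.2 (h hb hc hbc))
    · exact mul_pos_of_neg_of_neg (sub_neg.2 (h ha hb hab)) (sub_neg.2 (h hb hc hbc))
  refine ⟨EuclideanSpace.dist_lt_dist_of_forall_mul_pos between,
    EuclideanSpace.dist_lt_dist_of_forall_mul_pos fun k => ?_⟩
  linarith [between k]

theorem DistStrictMonoAwayOn.dual (hx : DistStrictMonoAwayOn x S) :
    DistStrictMonoAwayOn (x ∘ OrderDual.ofDual) (OrderDual.ofDual ⁻¹' S) :=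
  fun _ ha _ hb _ hc hab hbc => (hx hc hb ha hbc hab).symm

theorem DistStrictMonoAwayOn.eq_or_eq_of_dist_le (hx : DistStrictMonoAwayOn x S)
    {i j m m' : ι} (hi : i ∈ S) (hj : j ∈ S) (hm : m ∈ S) (hm' : m' ∈ S) (hij : i < j)
    (hjm : j < m) (h_i : dist (x i) (x m) ≤ dist (x i) (x m'))
    (h_j : dist (x j) (x m') ≤ dist (x j) (x m)) : m' = i ∨ m' = m := by
  rcases lt_trichotomy m' i with hm'i | rfl | him'
  · -- the cycle `d(j,m') ≤ d(j,m) < d(i,m) ≤ d(i,m') < d(j,m')`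
    have h₁ := (hx hm' hi hj hm'i hij).1
    have h₂ := (hx hi hj hm hij hjm).2
    rw [dist_comm (x m'), dist_comm (x m'), dist_comm (x m), dist_comm (x m)] at *
    linarith
  · exact .inl rfl
  rcases lt_trichotomy m' m with hm'm | rfl | hmm'
  · exact absurd h_i (not_le.2 (hx hi hm' hm him' hm'm).1)
  · exact .inr rfl
  · exact absurd h_j (not_le.2 (hx hj hm hm' hjm hmm').1)

/-- Two Voronoi cells, of centers `x a` and `x b`, cannot interleave along the sequence. -/
theorem DistStrictMonoAwayOn.notMem_of_le_of_le (hx : DistStrictMonoAwayOn x S) {p q : Set X}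
    (hpq : Disjoint p q) {a b : ι} (ha : a ∈ S) (hb : b ∈ S) (hap : x a ∈ p) (hbq : x b ∈ q)
    (hp : ∀ y ∈ p, dist y (x a) ≤ dist y (x b)) (hq : ∀ y ∈ q, dist y (x b) ≤ dist y (x a))
    {i j k : ι} (hi : i ∈ S) (hj : j ∈ S) (hk : k ∈ S) (hij : i ≤ j) (hjk : j ≤ k)
    (hip : x i ∈ p) (hkp : x k ∈ p) : x j ∉ q := by
  intro hjq
  have notMem_q : ∀ {y}, y ∈ p → y ∉ q := fun hy => Set.disjoint_left.1 hpq hy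
  rcases lt_trichotomy j a with hja | rfl | haj
  · have hij : i < j := hij.lt_of_ne (by rintro rfl; exact notMem_q hip hjq)
    rcases hx.eq_or_eq_of_dist_le hi hj ha hb hij hja (hp _ hip) (hq _ hjq) with rfl | rfl
    · exact notMem_q hip hbq
    · exact notMem_q hap hbq
  · exact notMem_q hap hjq
  · have hjk : j < k := hjk.lt_of_ne (by rintro rfl; exact notMem_q hkp hjq)
    have : b = k ∨ b = a := hx.dual.eq_or_eq_of_dist_le (i := OrderDual.toDual k)
      (j := OrderDual.toDual j) (m := OrderDual.toDual a) (m' := OrderDual.toDual b)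
      hk hj ha hb hjk haj (hp _ hkp) (hq _ hjq)
    rcases this with rfl | rfl
    · exact notMem_q hkp hbq
    · exact notMem_q hap hbq

end DistStrictMonoAway

structure IsIntervalPartition {ι : Type*} [LE ι] (S : Finset ι) (𝓘 : Finset (Finset ι)) :
    Prop where
  nonempty : ∀ I ∈ 𝓘, I.Nonempty
  disjoint : ∀ I ∈ 𝓘, ∀ J ∈ 𝓘, I ≠ J → Disjoint I J
  subset : ∀ I ∈ 𝓘, I ⊆ S
  exists_mem : ∀ j ∈ S, ∃ I ∈ 𝓘, j ∈ I
  mem_of_le_of_le : ∀ I ∈ 𝓘, ∀ i ∈ I, ∀ k ∈ I, ∀ j ∈ S, i ≤ j → j ≤ k → j ∈ I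

section IntervalPartition

variable {ι : Type*} [ConditionallyCompleteLinearOrder ι]

noncomputable def leftEnds (𝓘 : Finset (Finset ι)) : Finset ι :=
  𝓘.image fun I : Finset ι => sInf (I : Set ι)

def block (S M : Finset ι) (t : ι) : Finset ι :=
  S.filter fun j => t ≤ j ∧ ∀ s ∈ M, s ≤ j → s ≤ t

namespace IsIntervalPartition

variable {S : Finset ι} {𝓘 : Finset (Finset ι)} (h : IsIntervalPartition S 𝓘)
include h

theorem csInf_mem {I : Finset ι} (hI : I ∈ 𝓘) : sInf (I : Set ι) ∈ I :=
  (h.nonempty I hI).csInf_mem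

theorem eq_of_mem_of_mem {I J : Finset ι} (hI : I ∈ 𝓘) (hJ : J ∈ 𝓘) {j : ι} (hjI : j ∈ I)
    (hjJ : j ∈ J) : I = J :=
  by_contra fun hIJ => disjoint_left.1 (h.disjoint I hI J hJ hIJ) hjI hjJ

theorem block_leftEnds {I : Finset ι} (hI : I ∈ 𝓘) :
    block S (leftEnds 𝓘) (sInf (I : Set ι)) = I := by
  ext j
  simp only [block, leftEnds, mem_filter, forall_mem_image]
  constructor
  · rintro ⟨hjS, hIj, hlast⟩
    obtain ⟨J, hJ, hjJ⟩ := h.exists_mem j hjS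
    have hJj : sInf (J : Set ι) ≤ j := csInf_le J.bddBelow hjJ
    have hIJ : sInf (I : Set ι) ∈ J := h.mem_of_le_of_le J hJ _ (h.csInf_mem hJ) j hjJ _
      (h.subset I hI (h.csInf_mem hI)) (hlast hJ hJj) hIj
    exact h.eq_of_mem_of_mem hI hJ (h.csInf_mem hI) hIJ ▸ hjJ
  · intro hjI
    refine ⟨h.subset I hI hjI, csInf_le I.bddBelow hjI, fun J hJ hJj => ?_⟩
    by_contra! hlt
    have hJI : sInf (J : Set ι) ∈ I := h.mem_of_le_of_le I hI _ (h.csInf_mem hI) j hjI _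
      (h.subset J hJ (h.csInf_mem hJ)) hlt.le hJj
    exact hlt.ne (congrArg (fun K : Finset ι => sInf (K : Set ι))
      (h.eq_of_mem_of_mem hI hJ hJI (h.csInf_mem hJ)))

theorem image_block_leftEnds : (leftEnds 𝓘).image (block S (leftEnds 𝓘)) = 𝓘 := by
  rw [leftEnds, image_image]
  exact (image_congr fun I hI => h.block_leftEnds hI).trans image_id'

theorem leftEnds_subset : leftEnds 𝓘 ⊆ S := by
  simpa only [leftEnds, image_subset_iff] using fun I hI => h.subset I hI (h.csInf_mem hI)

theorem card_leftEnds : (leftEnds 𝓘).card = 𝓘.card :=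
  card_image_of_injOn fun _ hI _ hJ hIJ =>
    h.eq_of_mem_of_mem hI hJ (h.csInf_mem hI) (hIJ ▸ h.csInf_mem hJ)

end IsIntervalPartition

theorem ncard_le_choose_of_isIntervalPartition {S : Finset ι} {K : ℕ}
    {𝓟 : Set (Finset (Finset ι))} (h𝓟 : ∀ 𝓘 ∈ 𝓟, IsIntervalPartition S 𝓘 ∧ 𝓘.card = K) :
    𝓟.ncard ≤ S.card.choose K := by
  calc 𝓟.ncard ≤ (S.powersetCard K : Set (Finset ι)).ncard := by
        refine Set.ncard_le_ncard_of_injOn leftEnds (fun 𝓘 h𝓘 => ?_) (fun 𝓘 h𝓘 𝓙 h𝓙 heq => ?_)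
          (S.powersetCard K).finite_toSet
        · obtain ⟨hpart, hcard⟩ := h𝓟 𝓘 h𝓘
          exact mem_powersetCard.2 ⟨hpart.leftEnds_subset, hpart.card_leftEnds.trans hcard⟩
        · rw [← (h𝓟 𝓘 h𝓘).1.image_block_leftEnds, ← (h𝓟 𝓙 h𝓙).1.image_block_leftEnds, heq]
    _ = S.card.choose K := by rw [Set.ncard_coe_finset, card_powersetCard]

end IntervalPartition

section LocalMin

variable {ι : Type*} {X : Type*} [DecidableEq X]

def indicesIn (S : Finset ι) (x : ι → X) (p : Finset X) : Finset ι :=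
  S.filter fun i => x i ∈ p

theorem image_indicesIn {S : Finset ι} {x : ι → X} {p : Finset X} (hp : p ⊆ S.image x) :
    (indicesIn S x p).image x = p := by
  ext y
  simp only [indicesIn, mem_image, mem_filter]
  constructor
  · rintro ⟨i, ⟨-, hi⟩, rfl⟩
    exact hi
  · intro hy
    obtain ⟨i, hi, rfl⟩ := mem_image.1 (hp hy)
    exact ⟨i, ⟨hi, hy⟩, rfl⟩

variable {α : ℝ} {K : ℕ} {E : Finset E2} {π : Finset (Finset E2)}

theorem IsLocalMinPartition.subset (hπ : IsLocalMinPartition α E K π) {p : Finset E2}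
    (hp : p ∈ π) : p ⊆ E :=
  hπ.2.2.2.1 ▸ subset_biUnion_of_mem id hp

theorem IsLocalMinPartition.exists_mem (hπ : IsLocalMinPartition α E K π) {y : E2}
    (hy : y ∈ E) : ∃ p ∈ π, y ∈ p := by
  simpa only [← hπ.2.2.2.1, mem_biUnion, id] using hy

theorem IsLocalMinPartition.mem_of_le_of_le [LinearOrder ι] {S : Finset ι} {x : ι → E2}
    (hx : DistStrictMonoAwayOn x S) (hπ : IsLocalMinPartition α (S.image x) K π)
    {p : Finset E2} (hp : p ∈ π) {i j k : ι} (hi : i ∈ S) (hj : j ∈ S) (hk : k ∈ S)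
    (hij : i ≤ j) (hjk : j ≤ k) (hip : x i ∈ p) (hkp : x k ∈ p) : x j ∈ p := by
  obtain ⟨q, hq, hjq⟩ := hπ.exists_mem (mem_image_of_mem x hj)
  have hsub : ∀ p ∈ π, p ⊆ S.image x := fun _ => hπ.subset
  obtain ⟨-, -, hdisj, -, c, hc⟩ := hπ
  by_contra hjp
  have hpq : p ≠ q := by rintro rfl; exact hjp hjq
  obtain ⟨a, ha, hxa⟩ := mem_image.1 (hsub p hp (hc p hp).1)
  obtain ⟨b, hb, hxb⟩ := mem_image.1 (hsub q hq (hc q hq).1)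
  refine hx.notMem_of_le_of_le (p := p) (q := q) (disjoint_coe.2 (hdisj p hp q hq hpq)) ha hb
    (hxa ▸ (hc p hp).1) (hxb ▸ (hc q hq).1) (fun y hy => ?_) (fun y hy => ?_)
    hi hj hk hij hjk hip hkp hjq
  · rw [hxa, hxb]; exact (hc p hp).2.2 q hq hpq.symm y hy
  · rw [hxa, hxb]; exact (hc q hq).2.2 p hp hpq y hy

variable [DecidableEq ι]

theorem IsLocalMinPartition.image_image_indicesIn {S : Finset ι} {x : ι → E2}
    (hπ : IsLocalMinPartition α (S.image x) K π) :
    (π.image (indicesIn S x)).image (image x) = π := by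
  rw [image_image]
  exact (image_congr fun p hp => image_indicesIn (hπ.subset hp)).trans image_id'

theorem IsLocalMinPartition.card_image_indicesIn {S : Finset ι} {x : ι → E2}
    (hπ : IsLocalMinPartition α (S.image x) K π) : (π.image (indicesIn S x)).card = K := by
  rw [card_image_of_injOn fun p hp q hq hpq => ?_, hπ.1]
  rw [← image_indicesIn (hπ.subset hp), ← image_indicesIn (hπ.subset hq)]
  exact congrArg (image x) hpq

theorem IsLocalMinPartition.isIntervalPartition [LinearOrder ι] {S : Finset ι} {x : ι → E2}
    (hx : DistStrictMonoAwayOn x S) (hπ : IsLocalMinPartition α (S.image x) K π) :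
    IsIntervalPartition S (π.image (indicesIn S x)) := by
  refine ⟨?_, ?_, ?_, ?_, ?_⟩
  · simp only [forall_mem_image]
    intro p hp
    obtain ⟨y, hy⟩ := hπ.2.1 p hp
    obtain ⟨i, hi, rfl⟩ := mem_image.1 (hπ.subset hp hy)
    exact ⟨i, mem_filter.2 ⟨hi, hy⟩⟩
  · simp only [forall_mem_image]
    intro p hp q hq hpq
    refine disjoint_filter.2 fun i _ hip => disjoint_left.1 (hπ.2.2.1 p hp q hq ?_) hip
    rintro rfl
    exact hpq rfl
  · simp only [forall_mem_image]
    exact fun p _ => filter_subset _ _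
  · simp only [exists_mem_image, indicesIn, mem_filter]
    exact fun j hj => (hπ.exists_mem (mem_image_of_mem x hj)).imp fun p ⟨hp, hjp⟩ =>
      ⟨hp, hj, hjp⟩
  · simp only [forall_mem_image, indicesIn, mem_filter]
    exact fun p hp i ⟨hi, hip⟩ k ⟨hk, hkp⟩ j hj hij hjk =>
      ⟨hj, hπ.mem_of_le_of_le hx hp hi hj hk hij hjk hip hkp⟩

end LocalMin

theorem card_localMin_le_choose_general (α : ℝ) (K : ℕ)
    (N : ℕ) (x : ℕ → E2)
    (hsort : ∀ i j, 1 ≤ i → i < j → j ≤ N → x i 0 < x j 0 ∧ x j 1 < x i 1) :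
    Set.ncard {π : Finset (Finset E2) |
        IsLocalMinPartition α ((Finset.Icc 1 N).image x) K π} ≤ N.choose K := by
  set 𝓟 := {π : Finset (Finset E2) | IsLocalMinPartition α ((Icc 1 N).image x) K π}
  have hx : DistStrictMonoAwayOn x (Icc 1 N : Set ℕ) := by
    refine distStrictMonoAwayOn_of_monotone_coords (Fin.forall_fin_two.2 ⟨.inl ?_, .inr ?_⟩) <;>
      intro i hi j hj hij <;> rw [coe_Icc, Set.mem_Icc] at hi hj
    exacts [(hsort i j hi.1 hij hj.2).1, (hsort i j hi.1 hij hj.2).2]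
  have hinj : Set.InjOn (fun π => π.image (indicesIn (Icc 1 N) x)) 𝓟 := fun π hπ π' hπ' h => by
    dsimp only at h
    rw [← IsLocalMinPartition.image_image_indicesIn hπ,
      ← IsLocalMinPartition.image_image_indicesIn hπ']
    exact congrArg (image (image x)) h
  calc 𝓟.ncard = ((fun π => π.image (indicesIn (Icc 1 N) x)) '' 𝓟).ncard :=
        hinj.ncard_image.symm
    _ ≤ (Icc 1 N).card.choose K := ncard_le_choose_of_isIntervalPartition <| by
        rintro _ ⟨π, hπ, rfl⟩
        exact ⟨hπ.isIntervalPartition hx, hπ.card_image_indicesIn⟩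
    _ = N.choose K := by rw [Nat.card_Icc, Nat.add_sub_cancel]

/-- On a sorted 2d Pareto front of `N` points, at most `C(N, K)` distinct partitions into
`K` nonempty subsets occur as local minima of K-α-Med2dPF. -/
theorem card_localMin_le_choose (α : ℝ) (hα : 0 < α) (K : ℕ) (hK : 1 ≤ K)
    (N : ℕ) (x : ℕ → E2)
    (hsort : ∀ i j, 1 ≤ i → i < j → j ≤ N → x i 0 < x j 0 ∧ x j 1 < x i 1) :
    Set.ncard {π : Finset (Finset E2) |
        IsLocalMinPartition α ((Finset.Icc 1 N).image x) K π} ≤ N.choose K :=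
  card_localMin_le_choose_general α K N x hsort
end

section
/- Let α > 0, 1 ≤ K ≤ N, and let E = {x_1, …, x_N} be a sorted 2d Pareto front. The global minimum of Σ_{P ∈ π} f_α(P) over all partitions π of E into K nonempty subsets is attained by a partition into consecutive interval clusters: there exist indices 0 = j₀ < j₁ < ⋯ < j_K = N such that the partition {C_{j₀+1, j₁}, C_{j₁+1, j₂}, …, C_{j_{K−1}+1, j_K}} achieves this minimum. -/
/-!
On a sorted Pareto front, for indices `a ≤ b ≤ c` every coordinate of `x b` lies between those
of `x a` and `x c`, so the distance from `x i` to `x c` decreases as `c` approaches `i` from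
either side. Hence the Voronoi cells of any `K` points of the front (its nearest-centre regions)
are runs of consecutive indices, each containing its centre. Taking as centres the medoids of an
arbitrary partition, the interval clusters given by these cells cost at most the sum over all
points of the distance to the nearest medoid, which is at most the cost of the partition. There
are finitely many interval partitions, so one of them minimises the cost among them, hence
among all partitions.
-/

open scoped Classical

namespace Finset

variable {s : Finset ℕ} {k c : ℕ}

theorem nth_mem (hk : k < s.card) : Nat.nth (· ∈ s) k ∈ s :=
  Nat.nth_mem_of_lt_card s.finite_toSet (by rwa [finite_toSet_toFinset])

theorem nth_strictMonoOn : StrictMonoOn (Nat.nth (· ∈ s)) (Set.Iio s.card) := by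
  simpa only [finite_toSet_toFinset] using Nat.nth_strictMonoOn (p := (· ∈ s)) s.finite_toSet

theorem nth_lt_nth_succ (hk : k + 1 < s.card) : Nat.nth (· ∈ s) k < Nat.nth (· ∈ s) (k + 1) :=
  nth_strictMonoOn (Set.mem_Iio.2 (by omega)) hk k.lt_succ_self

theorem exists_lt_card_nth_eq (hc : c ∈ s) : ∃ k < s.card, Nat.nth (· ∈ s) k = c := by
  obtain ⟨k, hk, rfl⟩ := Nat.exists_lt_card_finite_nth_eq s.finite_toSet hc
  exact ⟨k, by rwa [finite_toSet_toFinset] at hk, rfl⟩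

theorem sum_range_sum_Ioc {M : Type*} [AddCommMonoid M] {K : ℕ} {j : ℕ → ℕ}
    (hj : MonotoneOn j (Set.Iic K)) (f : ℕ → M) :
    ∑ k ∈ range K, ∑ i ∈ Ioc (j k) (j (k + 1)), f i = ∑ i ∈ Ioc (j 0) (j K), f i := by
  induction K with
  | zero => simp
  | succ K ih =>
    rw [sum_range_succ, ih (hj.mono (Set.Iic_subset_Iic.2 K.le_succ)),
      sum_Ioc_consecutive _ (hj (by simp) (by simp) K.zero_le)
        (hj (by simp) (by simp) K.le_succ)]

end Finset

theorem EuclideanSpace.dist_le_dist_of_forall_mem_uIcc {ι : Type*} [Fintype ι]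
    {u v w : EuclideanSpace ℝ ι} (h : ∀ i, v i ∈ Set.uIcc (u i) (w i)) :
    dist u v ≤ dist u w := by
  rw [EuclideanSpace.dist_eq, EuclideanSpace.dist_eq]
  gcongr with i
  rw [dist_comm, Real.dist_eq, dist_comm, Real.dist_eq]
  exact Set.abs_sub_left_of_mem_uIcc (h i)

theorem fCost_le_sum (α : ℝ) {P : Finset E2} {y : E2} (hy : y ∈ P) :
    fCost α P ≤ ∑ z ∈ P, dist z y ^ α :=
  csInf_le (P.finite_toSet.image _).bddBelow ⟨y, hy, rfl⟩

theorem exists_mem_sum_eq_fCost (α : ℝ) {P : Finset E2} (hP : P.Nonempty) :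
    ∃ y ∈ P, ∑ z ∈ P, dist z y ^ α = fCost α P :=
  (hP.to_set.image _).csInf_mem (P.finite_toSet.image _)

theorem fCost_image_le (α : ℝ) {ι : Type*} {s : Finset ι} (x : ι → E2) {c : ι}
    (hc : c ∈ s) :
    fCost α (s.image x) ≤ ∑ i ∈ s, dist (x i) (x c) ^ α :=
  (fCost_le_sum α (Finset.mem_image_of_mem x hc)).trans
    (Finset.sum_image_le_of_nonneg fun _ _ => by positivity)

structure IsCutSequence (K N : ℕ) (j : ℕ → ℕ) : Prop where
  map_zero : j 0 = 0
  map_len : j K = N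
  lt_succ : ∀ k < K, j k < j (k + 1)

namespace IsCutSequence

variable {K N : ℕ} {j : ℕ → ℕ}

theorem monotoneOn (hj : IsCutSequence K N j) : MonotoneOn j (Set.Iic K) :=
  (strictMonoOn_Iic_of_lt_succ hj.lt_succ).monotoneOn

theorem le {k : ℕ} (hj : IsCutSequence K N j) (hk : k ≤ K) : j k ≤ N :=
  hj.map_len ▸ hj.monotoneOn hk (Set.mem_Iic.2 le_rfl) hk

end IsCutSequence

theorem exists_isCutSequence {K N : ℕ} (hK : 1 ≤ K) (hKN : K ≤ N) :
    ∃ j, IsCutSequence K N j :=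
  ⟨fun n => if n < K then n else N,
    ⟨if_pos hK, if_neg (lt_irrefl K), fun k hk => by split_ifs <;> omega⟩⟩

theorem exists_isCutSequence_forall_le {K N : ℕ} (hK : 1 ≤ K) (hKN : K ≤ N)
    (F : ℕ → ℕ → ℝ) :
    ∃ j, IsCutSequence K N j ∧ ∀ j', IsCutSequence K N j' →
      ∑ k : Fin K, F (j k) (j (k + 1)) ≤ ∑ k : Fin K, F (j' k) (j' (k + 1)) := by
  set cost : (ℕ → ℕ) → ℝ := fun j => ∑ k : Fin K, F (j k) (j (k + 1))
  -- the cost of a cut sequence only depends on its values at `0, …, K`, all at most `N`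
  have hfin : (cost '' {j | IsCutSequence K N j}).Finite := by
    refine (Set.finite_range fun g : Fin (K + 1) → Fin (N + 1) =>
      ∑ k : Fin K, F (g k.castSucc) (g k.succ)).subset ?_
    rintro _ ⟨j, hj, rfl⟩
    exact ⟨fun k => ⟨j k, Nat.lt_succ_of_le (hj.le k.is_le)⟩, rfl⟩
  obtain ⟨j₀, hj₀⟩ := exists_isCutSequence hK hKN
  obtain ⟨_, ⟨j, hj, rfl⟩, hmin⟩ := Set.exists_min_image _ id hfin ⟨_, j₀, hj₀, rfl⟩
  exact ⟨j, hj, fun j' hj' => hmin _ ⟨j', hj', rfl⟩⟩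

def IsSortedParetoFront (N : ℕ) (x : ℕ → E2) : Prop :=
  ∀ i j, 1 ≤ i → i < j → j ≤ N → x i 0 < x j 0 ∧ x j 1 < x i 1

noncomputable def bisectorCut (x : ℕ → E2) (a b : ℕ) : ℕ :=
  Nat.findGreatest (fun i => dist (x i) (x a) ≤ dist (x i) (x b)) (b - 1)

theorem le_bisectorCut {x : ℕ → E2} {a b : ℕ} (hab : a < b) : a ≤ bisectorCut x a b :=
  Nat.le_findGreatest (by omega) (by simp)

theorem bisectorCut_lt {x : ℕ → E2} {a b : ℕ} (hab : a < b) : bisectorCut x a b < b :=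
  (Nat.findGreatest_le _).trans_lt (by omega)

namespace IsSortedParetoFront

variable {N : ℕ} {x : ℕ → E2} {a b c i : ℕ}

theorem coords_le_of_le (hx : IsSortedParetoFront N x) (ha : 1 ≤ a) (hab : a ≤ b)
    (hb : b ≤ N) : x a 0 ≤ x b 0 ∧ x b 1 ≤ x a 1 := by
  rcases hab.eq_or_lt with rfl | hab
  · exact ⟨le_rfl, le_rfl⟩
  · exact (hx a b ha hab hb).imp le_of_lt le_of_lt

theorem injOn (hx : IsSortedParetoFront N x) : Set.InjOn x (Set.Icc 1 N) :=
  Set.InjOn.of_comp (g := fun p : E2 => p 0)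
    (StrictMonoOn.injOn fun a ha b hb hab => (hx a b ha.1 hab hb.2).1)

theorem mem_uIcc (hx : IsSortedParetoFront N x) (ha : 1 ≤ a) (hab : a ≤ b) (hbc : b ≤ c)
    (hc : c ≤ N) (k : Fin 2) : x b k ∈ Set.uIcc (x a k) (x c k) := by
  obtain ⟨hab0, hba1⟩ := hx.coords_le_of_le ha hab (hbc.trans hc)
  obtain ⟨hbc0, hcb1⟩ := hx.coords_le_of_le (ha.trans hab) hbc hc
  fin_cases k
  · exact Set.mem_uIcc_of_le hab0 hbc0
  · exact Set.mem_uIcc_of_ge hcb1 hba1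

theorem dist_le_dist_right (hx : IsSortedParetoFront N x) (ha : 1 ≤ a) (hab : a ≤ b)
    (hbc : b ≤ c) (hc : c ≤ N) : dist (x a) (x b) ≤ dist (x a) (x c) :=
  EuclideanSpace.dist_le_dist_of_forall_mem_uIcc (hx.mem_uIcc ha hab hbc hc)

theorem dist_le_dist_left (hx : IsSortedParetoFront N x) (ha : 1 ≤ a) (hab : a ≤ b)
    (hbc : b ≤ c) (hc : c ≤ N) : dist (x b) (x c) ≤ dist (x a) (x c) := by
  rw [dist_comm (x b), dist_comm (x a)]
  refine EuclideanSpace.dist_le_dist_of_forall_mem_uIcc fun k => ?_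
  rw [Set.uIcc_comm]
  exact hx.mem_uIcc ha hab hbc hc k

theorem dist_le_of_le_bisectorCut (hx : IsSortedParetoFront N x) (ha : 1 ≤ a) (hab : a < b)
    (hb : b ≤ N) (hi : 1 ≤ i) (hit : i ≤ bisectorCut x a b) :
    dist (x i) (x a) ≤ dist (x i) (x b) := by
  set t := bisectorCut x a b
  have htb : t < b := bisectorCut_lt hab
  rcases le_total i a with hia | hai
  · exact hx.dist_le_dist_right hi hia hab.le hb
  have ht : dist (x t) (x a) ≤ dist (x t) (x b) :=
    Nat.findGreatest_spec (P := fun i => dist (x i) (x a) ≤ dist (x i) (x b)) (m := a)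
      (by omega) (by simp)
  calc dist (x i) (x a) = dist (x a) (x i) := dist_comm _ _
    _ ≤ dist (x a) (x t) := hx.dist_le_dist_right ha hai hit (by omega)
    _ = dist (x t) (x a) := dist_comm _ _
    _ ≤ dist (x t) (x b) := ht
    _ ≤ dist (x i) (x b) := hx.dist_le_dist_left hi hit htb.le hb

theorem dist_le_of_bisectorCut_lt (hx : IsSortedParetoFront N x) (ha : 1 ≤ a) (hab : a < b)
    (hti : bisectorCut x a b < i) (hi : i ≤ N) : dist (x i) (x b) ≤ dist (x i) (x a) := by
  rcases le_or_gt b i with hbi | hib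
  · rw [dist_comm (x i), dist_comm (x i)]
    exact hx.dist_le_dist_left ha hab.le hbi hi
  · have hnot := Nat.findGreatest_is_greatest hti (by omega : i ≤ b - 1)
    exact (not_le.1 hnot).le

end IsSortedParetoFront

noncomputable def voronoiCuts (x : ℕ → E2) (N : ℕ) (s : Finset ℕ) : ℕ → ℕ
  | 0 => 0
  | k + 1 =>
    if k + 1 < s.card then bisectorCut x (Nat.nth (· ∈ s) k) (Nat.nth (· ∈ s) (k + 1)) else N

section voronoiCuts

open Finset

variable {N : ℕ} {x : ℕ → E2} {s : Finset ℕ} {k : ℕ}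

theorem voronoiCuts_succ_of_lt (hk : k + 1 < s.card) :
    voronoiCuts x N s (k + 1) = bisectorCut x (Nat.nth (· ∈ s) k) (Nat.nth (· ∈ s) (k + 1)) :=
  if_pos hk

theorem voronoiCuts_lt_nth (hs : s ⊆ Icc 1 N) (hk : k < s.card) :
    voronoiCuts x N s k < Nat.nth (· ∈ s) k := by
  cases k with
  | zero => exact (mem_Icc.1 (hs (nth_mem hk))).1
  | succ k => rw [voronoiCuts_succ_of_lt hk]; exact bisectorCut_lt (nth_lt_nth_succ hk)

theorem nth_le_voronoiCuts_succ (hs : s ⊆ Icc 1 N) (hk : k < s.card) :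
    Nat.nth (· ∈ s) k ≤ voronoiCuts x N s (k + 1) := by
  by_cases hk' : k + 1 < s.card
  · rw [voronoiCuts_succ_of_lt hk']; exact le_bisectorCut (nth_lt_nth_succ hk')
  · rw [voronoiCuts, if_neg hk']; exact (mem_Icc.1 (hs (nth_mem hk))).2

theorem isCutSequence_voronoiCuts (hs : s ⊆ Icc 1 N) (hne : s.Nonempty) :
    IsCutSequence s.card N (voronoiCuts x N s) where
  map_zero := rfl
  map_len := by
    obtain ⟨K, hK⟩ := Nat.exists_eq_add_one.2 hne.card_pos
    rw [hK, voronoiCuts, if_neg (by omega)]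
  lt_succ _ hk := (voronoiCuts_lt_nth hs hk).trans_le (nth_le_voronoiCuts_succ hs hk)

theorem IsSortedParetoFront.dist_nth_le_of_mem_Ioc_voronoiCuts (hx : IsSortedParetoFront N x)
    (hs : s ⊆ Icc 1 N) (hk : k < s.card) {i : ℕ}
    (hi : i ∈ Ioc (voronoiCuts x N s k) (voronoiCuts x N s (k + 1))) {c : ℕ} (hc : c ∈ s) :
    dist (x i) (x (Nat.nth (· ∈ s) k)) ≤ dist (x i) (x c) := by
  obtain ⟨g, hg, rfl⟩ := exists_lt_card_nth_eq hc
  obtain ⟨hki, hik⟩ := mem_Ioc.1 hi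
  have hiN : i ≤ N := hik.trans ((isCutSequence_voronoiCuts hs ⟨_, hc⟩).le hk)
  have hM : ∀ {n}, n < s.card → 1 ≤ Nat.nth (· ∈ s) n ∧ Nat.nth (· ∈ s) n ≤ N :=
    fun hn => mem_Icc.1 (hs (nth_mem hn))
  rcases lt_trichotomy k g with hkg | rfl | hgk
  · have hk1 : k + 1 < s.card := by omega
    rw [voronoiCuts_succ_of_lt hk1] at hik
    calc dist (x i) (x (Nat.nth (· ∈ s) k))
        ≤ dist (x i) (x (Nat.nth (· ∈ s) (k + 1))) :=
          hx.dist_le_of_le_bisectorCut (hM hk).1 (nth_lt_nth_succ hk1) (hM hk1).2 (by omega) hik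
      _ ≤ dist (x i) (x (Nat.nth (· ∈ s) g)) :=
          hx.dist_le_dist_right (by omega) (hik.trans (bisectorCut_lt (nth_lt_nth_succ hk1)).le)
            (nth_strictMonoOn.monotoneOn (Set.mem_Iio.2 hk1) (Set.mem_Iio.2 hg) hkg) (hM hg).2
  · exact le_rfl
  · obtain ⟨k, rfl⟩ := Nat.exists_eq_add_one_of_ne_zero (by omega : k ≠ 0)
    have hk0 : k < s.card := by omega
    have hMk : Nat.nth (· ∈ s) k ≤ i := (nth_le_voronoiCuts_succ hs hk0).trans hki.le
    rw [voronoiCuts_succ_of_lt hk] at hki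
    calc dist (x i) (x (Nat.nth (· ∈ s) (k + 1)))
        ≤ dist (x i) (x (Nat.nth (· ∈ s) k)) :=
          hx.dist_le_of_bisectorCut_lt (hM hk0).1 (nth_lt_nth_succ hk) hki hiN
      _ ≤ dist (x i) (x (Nat.nth (· ∈ s) g)) := by
          rw [dist_comm (x i), dist_comm (x i)]
          exact hx.dist_le_dist_left (hM hg).1
            (nth_strictMonoOn.monotoneOn (Set.mem_Iio.2 hg) (Set.mem_Iio.2 hk0) (by omega)) hMk hiN

end voronoiCuts

namespace IsSortedParetoFront

open Finset

variable {N : ℕ} {x : ℕ → E2} {α : ℝ}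

theorem exists_isCutSequence_sum_fCost_le (hx : IsSortedParetoFront N x) (hα : 0 ≤ α)
    {s : Finset ℕ} (hs : s ⊆ Icc 1 N) (hne : s.Nonempty) :
    ∃ j, IsCutSequence s.card N j ∧ ∑ k : Fin s.card, fCost α (C x (j k + 1) (j (k + 1))) ≤
      ∑ i ∈ Icc 1 N, s.inf' hne fun c => dist (x i) (x c) ^ α := by
  set j := voronoiCuts x N s
  have hj : IsCutSequence s.card N j := isCutSequence_voronoiCuts hs hne
  refine ⟨j, hj, ?_⟩
  calc ∑ k : Fin s.card, fCost α (C x (j k + 1) (j (k + 1)))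
      ≤ ∑ k : Fin s.card, ∑ i ∈ Ioc (j k) (j (k + 1)),
          s.inf' hne fun c => dist (x i) (x c) ^ α := by
        gcongr with k
        have hcenter : Nat.nth (· ∈ s) k ∈ Ioc (j k) (j (k + 1)) :=
          mem_Ioc.2 ⟨voronoiCuts_lt_nth hs k.2, nth_le_voronoiCuts_succ hs k.2⟩
        rw [C, Icc_add_one_left_eq_Ioc]
        refine (fCost_image_le α x hcenter).trans
          (sum_le_sum fun i hi => le_inf' _ _ fun c hc => ?_)
        exact Real.rpow_le_rpow dist_nonneg (hx.dist_nth_le_of_mem_Ioc_voronoiCuts hs k.2 hi hc) hα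
    _ = ∑ i ∈ Icc 1 N, s.inf' hne fun c => dist (x i) (x c) ^ α := by
        rw [Fin.sum_univ_eq_sum_range
            (fun k => ∑ i ∈ Ioc (j k) (j (k + 1)), s.inf' hne fun c => dist (x i) (x c) ^ α),
          sum_range_sum_Ioc hj.monotoneOn, hj.map_zero, hj.map_len, ← Icc_add_one_left_eq_Ioc,
          zero_add]

theorem exists_isCutSequence_le_of_partition (hx : IsSortedParetoFront N x) (hα : 0 ≤ α)
    {K : ℕ} (hK : 1 ≤ K) (P : Fin K → Finset E2) (hne : ∀ k, (P k).Nonempty)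
    (hdisj : ∀ k k', k ≠ k' → Disjoint (P k) (P k'))
    (hcover : univ.biUnion P = (Icc 1 N).image x) :
    ∃ j, IsCutSequence K N j ∧
      ∑ k : Fin K, fCost α (C x (j k + 1) (j (k + 1))) ≤ ∑ k : Fin K, fCost α (P k) := by
  choose y hyP hy using fun k => exists_mem_sum_eq_fCost α (hne k)
  have hyE : ∀ k, y k ∈ (Icc 1 N).image x :=
    fun k => hcover ▸ mem_biUnion.2 ⟨k, mem_univ k, hyP k⟩
  choose m hm hxm using fun k => mem_image.1 (hyE k)
  have hm_inj : Function.Injective m := by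
    intro k k' h
    by_contra hkk'
    exact disjoint_left.1 (hdisj k k' hkk') (hyP k) (by rw [← hxm k, h, hxm]; exact hyP k')
  set s := univ.image m
  have hsne : s.Nonempty := (univ_nonempty_iff.2 ⟨⟨0, hK⟩⟩).image m
  have hs : s ⊆ Icc 1 N := by
    intro c hc
    obtain ⟨k, -, rfl⟩ := mem_image.1 hc
    exact hm k
  obtain ⟨j, hj, hcost⟩ := hx.exists_isCutSequence_sum_fCost_le hα hs hsne
  rw [card_image_of_injective _ hm_inj, card_fin] at hj hcost
  refine ⟨j, hj, hcost.trans ?_⟩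
  calc ∑ i ∈ Icc 1 N, s.inf' hsne (fun c => dist (x i) (x c) ^ α)
      = ∑ z ∈ (Icc 1 N).image x, s.inf' hsne (fun c => dist z (x c) ^ α) := by
        rw [sum_image (by rw [coe_Icc]; exact hx.injOn)]
    _ = ∑ k, ∑ z ∈ P k, s.inf' hsne (fun c => dist z (x c) ^ α) := by
        rw [← hcover, sum_biUnion fun k _ k' _ => hdisj k k']
    _ ≤ ∑ k, ∑ z ∈ P k, dist z (y k) ^ α := by
        gcongr with k _ z _
        rw [← hxm k]
        exact inf'_le _ (mem_image_of_mem m (mem_univ k))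
    _ = ∑ k, fCost α (P k) := sum_congr rfl fun k _ => hy k

end IsSortedParetoFront

/-- On a sorted 2d Pareto front, the global minimum of `Σ_{P ∈ π} f_α(P)` over partitions
into `K` nonempty subsets is attained by a partition into consecutive interval clusters
`C_{j₀+1,j₁}, …, C_{j_{K−1}+1,j_K}` with `0 = j₀ < j₁ < ⋯ < j_K = N`. -/
theorem interval_partition_optimal (α : ℝ) (hα : 0 < α) (K N : ℕ)
    (hK : 1 ≤ K) (hKN : K ≤ N) (x : ℕ → E2)
    (hsort : ∀ i j, 1 ≤ i → i < j → j ≤ N → x i 0 < x j 0 ∧ x j 1 < x i 1) :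
    ∃ j : ℕ → ℕ, j 0 = 0 ∧ j K = N ∧ (∀ k, k < K → j k < j (k + 1)) ∧
      ∀ P : Fin K → Finset E2,
        (∀ k, (P k).Nonempty) →
        (∀ k k', k ≠ k' → Disjoint (P k) (P k')) →
        Finset.univ.biUnion P = (Finset.Icc 1 N).image x →
        ∑ k : Fin K, fCost α (C x (j k.val + 1) (j (k.val + 1))) ≤
          ∑ k : Fin K, fCost α (P k) := by
  obtain ⟨j, hj, hmin⟩ :=
    exists_isCutSequence_forall_le hK hKN fun a b => fCost α (C x (a + 1) b)
  refine ⟨j, hj.map_zero, hj.map_len, hj.lt_succ, fun P hne hdisj hcover => ?_⟩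
  obtain ⟨j', hj', hle⟩ := IsSortedParetoFront.exists_isCutSequence_le_of_partition (N := N)
    hsort hα.le hK P hne hdisj hcover
  exact (hmin j' hj').trans hle
end

section
/- Let α > 0 and let E = {x_1, …, x_N} be a sorted 2d Pareto front. Define M_{k,i} as the minimum of Σ_{P ∈ π} f_α(P) over all partitions π of {x_1, …, x_i} into k nonempty subsets. Then the Bellman equations hold: (i) M_{1,i} = f_α(C_{1,i}) for all i ∈ [1, N]; and (ii) for all k ∈ [2, K] and all i with k ≤ i ≤ N, M_{k,i} = min over j ∈ [k−1, i−1] of (M_{k−1,j} + f_α(C_{j+1,i})). -/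
open scoped Classical

/-- `M_{k,i}`: the optimal cost of partitioning the first `i` points `{x_1, …, x_i}` into
`k` nonempty clusters, each cluster paying its `α`-medoid cost. -/
noncomputable def Mval (α : ℝ) (x : ℕ → E2) (k i : ℕ) : ℝ :=
  sInf {v : ℝ | ∃ P : Fin k → Finset E2,
    (∀ m, (P m).Nonempty) ∧
    (∀ m m', m ≠ m' → Disjoint (P m) (P m')) ∧
    Finset.univ.biUnion P = (Finset.Icc 1 i).image x ∧
    v = ∑ m, fCost α (P m)}

/-!
Replacing the cost of each cluster by the cost of sending every point to its nearest medoid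
can only lower the total. On a sorted Pareto front, moving to the right brings a point closer to
the rightmost medoid `x L` and farther from every medoid left of it, so the points nearest to
`x L` form a final segment `(j, i]`. The other `k` medoids lie in `[1, j]`, hence the
nearest-medoid cost of the prefix is at least `M_{k,j}`, and that of the segment is at least
`f_α(C_{j+1,i})`. Conversely, a clustering of `x_1, …, x_j` together with `C_{j+1,i}` is a
clustering of `x_1, …, x_i`.
-/

open Finset Metric

lemma Nat.Icc_union_Icc_add_one {a j b : ℕ} (h₁ : a ≤ j + 1) (h₂ : j ≤ b) :
    Icc a j ∪ Icc (j + 1) b = Icc a b := by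
  ext t
  simp only [mem_union, mem_Icc]
  omega

lemma Nat.disjoint_Icc_Icc_add_one (a j b : ℕ) : Disjoint (Icc a j) (Icc (j + 1) b) :=
  disjoint_left.2 fun t h₁ h₂ => by
    rw [mem_Icc] at h₁ h₂
    omega

section Clustering

variable {α : ℝ} {k : ℕ} {Q R : Finset E2} {v : ℝ}

lemma fCost_nonneg (α : ℝ) (P : Finset E2) : 0 ≤ fCost α P :=
  Real.sInf_nonneg <| by
    rintro _ ⟨y, -, rfl⟩
    exact sum_nonneg fun z _ => Real.rpow_nonneg dist_nonneg α

lemma fCost_le_sum_rpow_dist {P : Finset E2} {y : E2} (hy : y ∈ P) :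
    fCost α P ≤ ∑ z ∈ P, dist z y ^ α :=
  csInf_le (P.finite_toSet.image _).bddBelow ⟨y, hy, rfl⟩

lemma exists_fCost_eq_sum_rpow_dist {P : Finset E2} (hP : P.Nonempty) :
    ∃ y ∈ P, fCost α P = ∑ z ∈ P, dist z y ^ α := by
  obtain ⟨y, hy, hyP⟩ := ((hP.to_set.image _).csInf_mem (P.finite_toSet.image _) :
    fCost α P ∈ (fun y => ∑ z ∈ P, dist z y ^ α) '' ↑P)
  exact ⟨y, hy, hyP.symm⟩

def clusteringCosts (α : ℝ) (k : ℕ) (Q : Finset E2) : Set ℝ :=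
  {v : ℝ | ∃ P : Fin k → Finset E2,
    (∀ m, (P m).Nonempty) ∧
    (∀ m m', m ≠ m' → Disjoint (P m) (P m')) ∧
    univ.biUnion P = Q ∧
    v = ∑ m, fCost α (P m)}

lemma Mval_eq_sInf_clusteringCosts (α : ℝ) (x : ℕ → E2) (k i : ℕ) :
    Mval α x k i = sInf (clusteringCosts α k ((Icc 1 i).image x)) :=
  rfl

lemma nonneg_of_mem_clusteringCosts (hv : v ∈ clusteringCosts α k Q) : 0 ≤ v := by
  obtain ⟨P, -, -, -, rfl⟩ := hv
  exact sum_nonneg fun m _ => fCost_nonneg α (P m)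

lemma bddBelow_clusteringCosts : BddBelow (clusteringCosts α k Q) :=
  ⟨0, fun _ => nonneg_of_mem_clusteringCosts⟩

lemma Mval_nonneg (α : ℝ) (x : ℕ → E2) (k i : ℕ) : 0 ≤ Mval α x k i :=
  Real.sInf_nonneg fun _ => nonneg_of_mem_clusteringCosts

lemma clusteringCosts_one (hQ : Q.Nonempty) : clusteringCosts α 1 Q = {fCost α Q} := by
  ext v
  constructor
  · rintro ⟨P, -, -, hPQ, rfl⟩
    rw [← hPQ]
    simp
  · rintro rfl
    exact ⟨fun _ => Q, fun _ => hQ, fun m m' h => absurd (Subsingleton.elim m m') h,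
      by simp, by simp⟩

lemma add_fCost_mem_clusteringCosts_succ (hv : v ∈ clusteringCosts α k Q) (hR : R.Nonempty)
    (hQR : Disjoint Q R) : v + fCost α R ∈ clusteringCosts α (k + 1) (Q ∪ R) := by
  obtain ⟨P, hne, hdisj, hPQ, rfl⟩ := hv
  have hPsub : ∀ m, P m ⊆ Q := fun m => hPQ ▸ subset_biUnion_of_mem P (mem_univ m)
  refine ⟨Fin.snoc P R, fun m => ?_, fun m m' => ?_, ?_, by simp [Fin.sum_univ_castSucc]⟩
  · induction m using Fin.lastCases <;> simp [hR, hne]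
  · induction m using Fin.lastCases <;> induction m' using Fin.lastCases <;>
      simp only [Fin.snoc_last, Fin.snoc_castSucc, ne_eq, not_true_eq_false, Fin.castSucc_inj,
        IsEmpty.forall_iff, Fin.castSucc_ne_last, (Fin.castSucc_ne_last _).symm,
        not_false_eq_true, forall_const]
    · exact (hQR.mono_left (hPsub _)).symm
    · exact hQR.mono_left (hPsub _)
    · exact hdisj _ _
  · rw [← hPQ]
    ext z
    simp [Fin.exists_fin_succ', or_comm]

lemma clusteringCosts_nonempty (hk : 1 ≤ k) (hkQ : k ≤ #Q) :
    (clusteringCosts α k Q).Nonempty := by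
  induction k, hk using Nat.le_induction generalizing Q with
  | base =>
    have hQ : Q.Nonempty := card_pos.1 hkQ
    exact ⟨fCost α Q, by rw [clusteringCosts_one hQ]; rfl⟩
  | succ k _ ih =>
    obtain ⟨z, hz⟩ : Q.Nonempty := card_pos.1 (by omega)
    obtain ⟨v, hv⟩ := ih (Q := Q.erase z) (by rw [card_erase_of_mem hz]; omega)
    have := add_fCost_mem_clusteringCosts_succ hv (singleton_nonempty z) (by simp)
    rw [erase_union_eq z Q hz] at this
    exact ⟨_, this⟩

lemma sInf_clusteringCosts_succ_le (hQ : (clusteringCosts α k Q).Nonempty) (hR : R.Nonempty)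
    (hQR : Disjoint Q R) :
    sInf (clusteringCosts α (k + 1) (Q ∪ R)) ≤ sInf (clusteringCosts α k Q) + fCost α R := by
  rw [← sub_le_iff_le_add]
  exact le_csInf hQ fun v hv => sub_le_iff_le_add.2 <|
    csInf_le bddBelow_clusteringCosts (add_fCost_mem_clusteringCosts_succ hv hR hQR)

end Clustering

section Medoids

variable {α : ℝ} {k : ℕ} {Q S : Finset E2} {v : ℝ}

lemma exists_medoids_sum_infDist_rpow_le (hα : 0 ≤ α) (hv : v ∈ clusteringCosts α k Q) :
    ∃ S ⊆ Q, #S = k ∧ ∑ z ∈ Q, infDist z ↑S ^ α ≤ v := by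
  obtain ⟨P, hne, hdisj, hPQ, rfl⟩ := hv
  choose y hyP hy using fun m => exists_fCost_eq_sum_rpow_dist (α := α) (hne m)
  have hy_inj : Function.Injective y := fun m m' h => by
    by_contra hmm
    exact disjoint_left.1 (hdisj m m' hmm) (hyP m) (h ▸ hyP m')
  refine ⟨univ.image y, ?_, by simp [card_image_of_injective _ hy_inj], ?_⟩
  · rw [← hPQ]
    exact image_subset_iff.2 fun m _ => mem_biUnion.2 ⟨m, mem_univ m, hyP m⟩
  · rw [← hPQ, sum_biUnion fun m _ m' _ h => hdisj m m' h]
    refine sum_le_sum fun m _ => (hy m).symm ▸ sum_le_sum fun z _ => ?_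
    exact Real.rpow_le_rpow infDist_nonneg
      (infDist_le_dist_of_mem (by simp)) hα

lemma sInf_clusteringCosts_le_sum_infDist_rpow (hSQ : S ⊆ Q) (hS : S.Nonempty) :
    sInf (clusteringCosts α #S Q) ≤ ∑ z ∈ Q, infDist z ↑S ^ α := by
  choose a haS ha using S.finite_toSet.isCompact.exists_infDist_eq_dist hS.to_set
  have ha_fix : ∀ c ∈ S, a c = c := fun c hc =>
    (dist_le_zero.1 ((ha c).symm.trans (infDist_zero_of_mem (mem_coe.2 hc))).le).symm
  set e := S.equivFinOfCardEq rfl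
  set cell : E2 → Fin #S := fun z => e ⟨a z, haS z⟩
  have hcell : ∀ m, cell (e.symm m) = m := fun m => by
    simp only [cell, ha_fix _ (e.symm m).2]
    exact e.apply_symm_apply m
  refine csInf_le bddBelow_clusteringCosts ⟨fun m => Q.filter (cell · = m), fun m => ?_,
    fun m m' h => disjoint_filter.2 fun z _ hz hz' => h (hz ▸ hz'), ?_, rfl⟩ |>.trans ?_
  · exact ⟨e.symm m, mem_filter.2 ⟨hSQ (e.symm m).2, hcell m⟩⟩
  · ext z
    simp
  · rw [← sum_fiberwise Q cell]
    refine sum_le_sum fun m _ => (fCost_le_sum_rpow_dist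
      (mem_filter.2 ⟨hSQ (e.symm m).2, hcell m⟩)).trans_eq (sum_congr rfl fun z hz => ?_)
    rw [ha z, ← (mem_filter.1 hz).2]
    simp [cell]

lemma Metric.infDist_erase_le_infDist {X : Type*} [PseudoMetricSpace X] [DecidableEq X]
    {S : Finset X} {c y z : X} (hy : y ∈ S) (hyc : y ≠ c) (h : dist z y ≤ dist z c) :
    infDist z ↑(S.erase c) ≤ infDist z ↑S := by
  refine (le_infDist ⟨y, mem_coe.2 hy⟩).2 fun y' hy' => ?_
  by_cases hc : y' = c
  · exact (infDist_le_dist_of_mem (mem_coe.2 (mem_erase.2 ⟨hyc, hy⟩))).trans (hc ▸ h)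
  · exact infDist_le_dist_of_mem (mem_coe.2 (mem_erase.2 ⟨hc, hy'⟩))

end Medoids

lemma EuclideanSpace.dist_le_dist_of_forall {ι : Type*} [Fintype ι]
    {u v w : EuclideanSpace ℝ ι} (h : ∀ k, dist (u k) (v k) ≤ dist (u k) (w k)) :
    dist u v ≤ dist u w := by
  simp only [EuclideanSpace.dist_eq]
  gcongr with k
  exact h k

lemma EuclideanSpace.dist_lt_dist_of_forall {ι : Type*} [Fintype ι]
    {u v w : EuclideanSpace ℝ ι} (h : ∀ k, dist (u k) (v k) ≤ dist (u k) (w k)) (k₀ : ι)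
    (hk₀ : dist (u k₀) (v k₀) < dist (u k₀) (w k₀)) : dist u v < dist u w := by
  simp only [EuclideanSpace.dist_eq]
  refine Real.sqrt_lt_sqrt (by positivity) (sum_lt_sum (fun k _ => ?_) ⟨k₀, mem_univ _, ?_⟩)
  · exact pow_le_pow_left₀ dist_nonneg (h k) 2
  · exact pow_lt_pow_left₀ hk₀ dist_nonneg two_ne_zero

def IsSortedFront (N : ℕ) (x : ℕ → E2) : Prop :=
  ∀ i j, 1 ≤ i → i < j → j ≤ N → x i 0 < x j 0 ∧ x j 1 < x i 1

namespace IsSortedFront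

variable {α : ℝ} {N : ℕ} {x : ℕ → E2} (hx : IsSortedFront N x)
include hx

lemma injOn : Set.InjOn x (Set.Icc 1 N) := by
  intro a ha b hb hab
  by_contra hne
  rcases Nat.lt_or_gt_of_ne hne with h | h
  · exact (hx a b ha.1 h hb.2).1.ne (congrArg (· 0) hab)
  · exact (hx b a hb.1 h ha.2).1.ne (congrArg (· 0) hab).symm

lemma mem_uIcc {a b c : ℕ} (ha : 1 ≤ a) (hab : a ≤ b) (hbc : b ≤ c) (hc : c ≤ N) (k : Fin 2) :
    x b k ∈ Set.uIcc (x a k) (x c k) := by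
  have mono : ∀ {p q}, 1 ≤ p → p ≤ q → q ≤ N → x p 0 ≤ x q 0 ∧ x q 1 ≤ x p 1 := by
    intro p q hp hpq hq
    rcases hpq.eq_or_lt with rfl | hlt
    · exact ⟨le_rfl, le_rfl⟩
    · exact ⟨(hx p q hp hlt hq).1.le, (hx p q hp hlt hq).2.le⟩
  have h₁ := mono ha hab (hbc.trans hc)
  have h₂ := mono (ha.trans hab) hbc hc
  fin_cases k
  · exact Set.mem_uIcc_of_le h₁.1 h₂.1
  · exact Set.mem_uIcc_of_ge h₂.2 h₁.2

lemma dist_left_le {a b c : ℕ} (ha : 1 ≤ a) (hab : a ≤ b) (hbc : b ≤ c) (hc : c ≤ N) :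
    dist (x a) (x b) ≤ dist (x a) (x c) :=
  EuclideanSpace.dist_le_dist_of_forall fun k =>
    Real.dist_left_le_of_mem_uIcc (hx.mem_uIcc ha hab hbc hc k)

lemma dist_right_le {a b c : ℕ} (ha : 1 ≤ a) (hab : a ≤ b) (hbc : b ≤ c) (hc : c ≤ N) :
    dist (x b) (x c) ≤ dist (x a) (x c) := by
  rw [dist_comm (x b), dist_comm (x a)]
  exact EuclideanSpace.dist_le_dist_of_forall fun k =>
    Real.dist_left_le_of_mem_uIcc (Set.uIcc_comm (x a k) (x c k) ▸ hx.mem_uIcc ha hab hbc hc k)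

lemma dist_left_lt {a b c : ℕ} (ha : 1 ≤ a) (hab : a < b) (hbc : b < c) (hc : c ≤ N) :
    dist (x a) (x b) < dist (x a) (x c) := by
  refine EuclideanSpace.dist_lt_dist_of_forall (fun k =>
    Real.dist_left_le_of_mem_uIcc (hx.mem_uIcc ha hab.le hbc.le hc k)) 0 ?_
  have h₁ := (hx a b ha hab (hbc.le.trans hc)).1
  have h₂ := (hx b c (ha.trans hab.le) hbc hc).1
  rw [Real.dist_eq, Real.dist_eq, abs_of_neg (by linarith), abs_of_neg (by linarith)]
  linarith

lemma dist_le_dist_of_le {m L t t' : ℕ} (hm : 1 ≤ m) (hmL : m ≤ L) (hL : L ≤ N) (ht : 1 ≤ t)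
    (htt' : t ≤ t') (ht' : t' ≤ N) (h : dist (x t) (x L) ≤ dist (x t) (x m)) :
    dist (x t') (x L) ≤ dist (x t') (x m) := by
  rcases hmL.eq_or_lt with rfl | hmL
  · exact le_rfl
  rcases lt_or_ge t m with htm | hmt
  · exact absurd h (hx.dist_left_lt ht htm hmL hL).not_ge
  rcases le_total t' L with ht'L | hLt'
  · calc dist (x t') (x L) ≤ dist (x t) (x L) := hx.dist_right_le ht htt' ht'L hL
      _ ≤ dist (x t) (x m) := h
      _ = dist (x m) (x t) := dist_comm _ _
      _ ≤ dist (x m) (x t') := hx.dist_left_le hm hmt htt' ht'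
      _ = dist (x t') (x m) := dist_comm _ _
  · rw [dist_comm, dist_comm (x t')]
    exact hx.dist_right_le hm hmL.le hLt' ht'

lemma injOn_Icc {a b : ℕ} (ha : 1 ≤ a) (hb : b ≤ N) : Set.InjOn x ↑(Icc a b) :=
  hx.injOn.mono fun t ht => by
    rw [mem_coe, mem_Icc] at ht
    exact ⟨ha.trans ht.1, ht.2.trans hb⟩

lemma card_image_Icc_one {j : ℕ} (hj : j ≤ N) : #((Icc 1 j).image x) = j := by
  rw [card_image_of_injOn (hx.injOn_Icc le_rfl hj), Nat.card_Icc, Nat.add_sub_cancel]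

lemma Mval_le_sum_infDist_rpow {j : ℕ} (hj : j ≤ N) {S : Finset E2}
    (hS : S ⊆ (Icc 1 j).image x) (hSne : S.Nonempty) :
    Mval α x #S j ≤ ∑ t ∈ Icc 1 j, infDist (x t) ↑S ^ α :=
  (sInf_clusteringCosts_le_sum_infDist_rpow hS hSne).trans_eq
    (sum_image (hx.injOn_Icc le_rfl hj))

lemma fCost_C_le_sum_rpow_dist {a b L : ℕ} (ha : 1 ≤ a) (hb : b ≤ N) (hL : L ∈ Icc a b) :
    fCost α (C x a b) ≤ ∑ t ∈ Icc a b, dist (x t) (x L) ^ α :=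
  (fCost_le_sum_rpow_dist (mem_image_of_mem x hL)).trans_eq
    (sum_image (hx.injOn_Icc ha hb))

lemma Mval_succ_le {k j i : ℕ} (hk : 1 ≤ k) (hkj : k ≤ j) (hji : j < i) (hi : i ≤ N) :
    Mval α x (k + 1) i ≤ Mval α x k j + fCost α (C x (j + 1) i) := by
  have hdisj : Disjoint ((Icc 1 j).image x) (C x (j + 1) i) := by
    rw [← disjoint_coe, coe_image, C, coe_image]
    exact (disjoint_coe.2 (Nat.disjoint_Icc_Icc_add_one 1 j i)).image (hx.injOn_Icc le_rfl hi)
      (coe_subset.2 (Icc_subset_Icc_right hji.le))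
      (coe_subset.2 (Icc_subset_Icc (by omega) le_rfl))
  rw [Mval_eq_sInf_clusteringCosts, ← Nat.Icc_union_Icc_add_one (by omega) hji.le, image_union]
  exact sInf_clusteringCosts_succ_le
    (clusteringCosts_nonempty hk ((hx.card_image_Icc_one (hji.le.trans hi)).symm ▸ hkj))
    ((nonempty_Icc.2 hji).image x) hdisj

lemma exists_nearest_max_iff_lt {i : ℕ} (hi : i ≤ N) {s : Finset ℕ} (hs : s ⊆ Icc 1 i)
    (hsne : s.Nonempty) : ∃ j < i, ∀ t ∈ Icc 1 i,
      (j < t ↔ ∀ m ∈ s, dist (x t) (x (s.max' hsne)) ≤ dist (x t) (x m)) := by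
  set L := s.max' hsne
  set G := (Icc 1 i).filter fun t => ∀ m ∈ s, dist (x t) (x L) ≤ dist (x t) (x m)
  have hLG : L ∈ G := mem_filter.2 ⟨hs (s.max'_mem hsne), fun m _ => by simp⟩
  obtain ⟨ht₀, hnear⟩ := mem_filter.1 (G.min'_mem ⟨L, hLG⟩)
  have hL := mem_Icc.1 (hs (s.max'_mem hsne))
  rw [mem_Icc] at ht₀
  refine ⟨G.min' ⟨L, hLG⟩ - 1, by omega, fun t ht => ⟨fun h m hm => ?_, fun h => ?_⟩⟩
  · exact hx.dist_le_dist_of_le (mem_Icc.1 (hs hm)).1 (s.le_max' m hm) (hL.2.trans hi)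
      ht₀.1 (by omega) ((mem_Icc.1 ht).2.trans hi) (hnear m hm)
  · have := G.min'_le t (mem_filter.2 ⟨ht, h⟩)
    omega

lemma exists_Mval_add_fCost_le_sum_infDist_rpow (hα : 0 ≤ α) {k i : ℕ} (hk : 1 ≤ k)
    (hi : i ≤ N) {S : Finset E2} (hS : S ⊆ (Icc 1 i).image x) (hSk : #S = k + 1) :
    ∃ j, k ≤ j ∧ j ≤ i - 1 ∧
      Mval α x k j + fCost α (C x (j + 1) i) ≤ ∑ t ∈ Icc 1 i, infDist (x t) ↑S ^ α := by
  obtain ⟨s, hs, rfl⟩ := subset_image_iff.1 hS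
  have hsne : s.Nonempty := image_nonempty.1 (card_pos.1 (by rw [hSk]; exact k.succ_pos))
  set L := s.max' hsne
  have hLs : L ∈ s := s.max'_mem hsne
  obtain ⟨j, hji, hcell⟩ := hx.exists_nearest_max_iff_lt hi hs hsne
  have hLj : j < L := (hcell L (hs hLs)).2 fun m _ => (dist_self (x L)).symm ▸ dist_nonneg
  set S' := (s.image x).erase (x L)
  have hS'j : S' ⊆ (Icc 1 j).image x := by
    intro y hy
    obtain ⟨hyL, hy⟩ := mem_erase.1 hy
    obtain ⟨m, hm, rfl⟩ := mem_image.1 hy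
    refine mem_image_of_mem x (mem_Icc.2 ⟨(mem_Icc.1 (hs hm)).1, not_lt.1 fun hjm => hyL ?_⟩)
    simpa using (hcell m (hs hm)).1 hjm m hm
  have hS'k : #S' = k := by
    rw [card_erase_of_mem (mem_image_of_mem x hLs), hSk, Nat.add_sub_cancel]
  have hkj : k ≤ j :=
    hS'k ▸ (card_le_card hS'j).trans (hx.card_image_Icc_one (hji.le.trans hi)).le
  refine ⟨j, hkj, by omega, ?_⟩
  rw [← Nat.Icc_union_Icc_add_one le_add_self hji.le,
    sum_union (Nat.disjoint_Icc_Icc_add_one 1 j i)]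
  refine add_le_add ?_ ?_
  · refine (hS'k ▸ hx.Mval_le_sum_infDist_rpow (hji.le.trans hi) hS'j
      (card_pos.1 (by omega))).trans (sum_le_sum fun t ht => ?_)
    have ht := mem_Icc.1 ht
    obtain ⟨m, hm, hcloser⟩ : ∃ m ∈ s, dist (x t) (x m) < dist (x t) (x L) := by
      simpa using (hcell t (mem_Icc.2 ⟨ht.1, by omega⟩)).not.1 (by omega)
    refine Real.rpow_le_rpow infDist_nonneg
      (infDist_erase_le_infDist (mem_image_of_mem x hm) ?_ hcloser.le) hα
    rintro h
    exact hcloser.ne (h ▸ rfl)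
  · refine (hx.fCost_C_le_sum_rpow_dist (by omega) hi
      (mem_Icc.2 ⟨hLj, (mem_Icc.1 (hs hLs)).2⟩)).trans (sum_le_sum fun t ht => ?_)
    have ht := mem_Icc.1 ht
    refine Real.rpow_le_rpow dist_nonneg ((le_infDist (by simpa using hsne)).2 ?_) hα
    intro _ hy
    obtain ⟨m, hm, rfl⟩ := mem_image.1 (mem_coe.1 hy)
    exact (hcell t (mem_Icc.2 ⟨by omega, ht.2⟩)).1 (by omega) m hm

end IsSortedFront

/-- Bellman equations: `M_{1,i} = f_α(C_{1,i})` and, for `2 ≤ k ≤ K` and `k ≤ i ≤ N`,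
`M_{k,i} = min_{j ∈ [k−1, i−1]} (M_{k−1,j} + f_α(C_{j+1,i}))`. -/
theorem bellman_equations (α : ℝ) (hα : 0 < α) (K N : ℕ) (x : ℕ → E2)
    (hsort : ∀ i j, 1 ≤ i → i < j → j ≤ N → x i 0 < x j 0 ∧ x j 1 < x i 1) :
    (∀ i, 1 ≤ i → i ≤ N → Mval α x 1 i = fCost α (C x 1 i)) ∧
    (∀ k i, 2 ≤ k → k ≤ K → k ≤ i → i ≤ N →
      Mval α x k i = sInf {v : ℝ | ∃ j, k - 1 ≤ j ∧ j ≤ i - 1 ∧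
        v = Mval α x (k - 1) j + fCost α (C x (j + 1) i)}) := by
  have hx : IsSortedFront N x := hsort
  refine ⟨fun i hi _ => ?_, fun k i hk _ hki hi => ?_⟩
  · rw [Mval_eq_sInf_clusteringCosts, clusteringCosts_one ((nonempty_Icc.2 hi).image x),
      csInf_singleton, C]
  obtain ⟨k, rfl⟩ : ∃ k', k = k' + 1 := ⟨k - 1, by omega⟩
  rw [Nat.add_sub_cancel]
  refine le_antisymm (le_csInf ⟨_, k, le_rfl, by omega, rfl⟩ ?_) ?_
  · rintro _ ⟨j, hkj, hji, rfl⟩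
    exact hx.Mval_succ_le (by omega) hkj (by omega) hi
  refine le_csInf (clusteringCosts_nonempty (by omega) ((hx.card_image_Icc_one hi).symm ▸ hki))
    fun v hv => ?_
  obtain ⟨S, hS, hSk, hSv⟩ := exists_medoids_sum_infDist_rpow_le hα.le hv
  obtain ⟨j, hkj, hji, hj⟩ :=
    hx.exists_Mval_add_fCost_le_sum_infDist_rpow hα.le (by omega) hi hS hSk
  have hbdd : BddBelow {v : ℝ | ∃ j, k ≤ j ∧ j ≤ i - 1 ∧
      v = Mval α x k j + fCost α (C x (j + 1) i)} :=
    ⟨0, by rintro _ ⟨j, -, -, rfl⟩; exact add_nonneg (Mval_nonneg α x k j) (fCost_nonneg α _)⟩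
  calc sInf _ ≤ Mval α x k j + fCost α (C x (j + 1) i) := csInf_le hbdd ⟨j, hkj, hji, rfl⟩
    _ ≤ ∑ t ∈ Icc 1 i, infDist (x t) ↑S ^ α := hj
    _ = ∑ z ∈ (Icc 1 i).image x, infDist z ↑S ^ α :=
      (sum_image (f := fun z : E2 => infDist z ↑S ^ α) (hx.injOn_Icc le_rfl hi)).symm
    _ ≤ v := hSv
end
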